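/- arXiv:0711.2677 — 7 statements merged into one kernel-verified Lean document; each statement's English description precedes it below -/
import Mathlib

section
/- Let K be an algebraically closed field with a valuation v: K^* → ℚ such that v(n·1_K) = 0 for every nonzero integer n. For any rational number R ≥ 0, the set U = {u ∈ K^* : v(u) = 0 and v(u − 1) ≥ R} is a subgroup of K^* which is divisible: for every u ∈ U and every positive integer m there exists w ∈ U with w^m = u. -/
/-- The set `U = {u ∈ K^* : v u = 0 and v (u - 1) ≥ R}`. -/
def NearOneSubgroup {K : Type*} [Field K] (v : K → WithTop ℚ) (R : ℚ) (x : K) : Prop :=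
  v x = 0 ∧ (R : WithTop ℚ) ≤ v (x - 1)

/-!
Read `v` as an additive valuation. The subgroup properties are the ultrametric inequality
applied to `xy - 1 = x (y - 1) + (x - 1)` and `x⁻¹ - 1 = -(x - 1) / x`. For divisibility, the
`m`-th roots `r` of `u` satisfy `1 - u = ∏ (1 - r)`, so if `v (u - 1) > 0` some root has
`v (r - 1) > 0`. For that root `1 + r + ⋯ + r ^ (m - 1) ≡ m` modulo the maximal ideal, a unit
because the residue characteristic is zero, so `v (u - 1) = v (r - 1)`. If `v (u - 1) ≤ 0`
then `R ≤ 0` and every root of `u` lies in `U`.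
-/

open Polynomial Finset

theorem WithTop.rat_eq_zero_of_nsmul_eq_zero {m : ℕ} (hm : m ≠ 0) {a : WithTop ℚ}
    (h : m • a = 0) : a = 0 := by
  induction a using WithTop.recTopCoe with
  | top =>
    obtain ⟨k, rfl⟩ := Nat.exists_eq_succ_of_ne_zero hm
    simp [succ_nsmul] at h
  | coe q =>
    norm_cast at h ⊢
    simpa [hm] using h

namespace AddValuation

theorem map_prod_nonpos {A Γ₀ : Type*} [CommRing A] [LinearOrderedAddCommMonoidWithTop Γ₀]
    (v : AddValuation A Γ₀) (s : Multiset A) (hs : ∀ a ∈ s, v a ≤ 0) : v s.prod ≤ 0 :=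
  Multiset.prod_induction (fun a => v a ≤ 0) s
    (fun a b ha hb => by rw [v.map_mul]; exact add_nonpos ha hb) v.map_one.le hs

section Ring

variable {A Γ₀ : Type*} [Ring A] [LinearOrderedAddCommMonoidWithTop Γ₀] (v : AddValuation A Γ₀)

theorem map_eq_zero_of_map_sub_one_pos {r : A} (hr : 0 < v (r - 1)) : v r = 0 := by
  rw [v.map_eq_of_lt_sub (v.map_one ▸ hr), v.map_one]

theorem map_geom_sum_eq_zero {r : A} {m : ℕ} (hm : v (m : A) = 0) (hr : 0 < v (r - 1)) :
    v (∑ i ∈ range m, r ^ i) = 0 := by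
  have hr0 : v r = 0 := v.map_eq_zero_of_map_sub_one_pos hr
  have hpow_sub : ∀ i, 0 < v (r ^ i - 1) := fun i => by
    rw [← geom_sum_mul, v.map_mul]
    refine hr.trans_le (le_add_of_nonneg_left (v.map_le_sum fun j _ => ?_))
    rw [v.map_pow, hr0, nsmul_zero]
  have hsplit : ∑ i ∈ range m, r ^ i = (m : A) + ∑ i ∈ range m, (r ^ i - 1) := by
    simp [sum_sub_distrib]
  have htail : v (m : A) < v (∑ i ∈ range m, (r ^ i - 1)) :=
    hm ▸ v.map_lt_sum' (hr.trans_le le_top) fun i _ => hpow_sub i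
  rw [hsplit, v.map_add_eq_of_lt_left htail, hm]

theorem map_pow_sub_one {r : A} {m : ℕ} (hm : v (m : A) = 0) (hr : 0 < v (r - 1)) :
    v (r ^ m - 1) = v (r - 1) := by
  rw [← geom_sum_mul, v.map_mul, v.map_geom_sum_eq_zero hm hr, zero_add]

end Ring

section Field

variable {K : Type*} [Field K]

theorem map_eq_zero_of_map_pow_eq_zero (v : AddValuation K (WithTop ℚ)) {x : K} {m : ℕ}
    (hm : m ≠ 0) (hx : v (x ^ m) = 0) : v x = 0 :=
  WithTop.rat_eq_zero_of_nsmul_eq_zero hm (v.map_pow x m ▸ hx)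

theorem one_sub_eq_prod_nthRoots [IsAlgClosed K] (u : K) {m : ℕ} (hm : m ≠ 0) :
    1 - u = ((nthRoots m u).map (1 - ·)).prod := by
  have h := (IsAlgClosed.splits (X ^ m - C u)).eval_eq_prod_roots_of_monic
    (monic_X_pow_sub_C u hm) 1
  simpa [nthRoots] using h

theorem exists_pow_eq_map_sub_one_pos [IsAlgClosed K] {Γ₀ : Type*}
    [LinearOrderedAddCommMonoidWithTop Γ₀] (v : AddValuation K Γ₀) {u : K} {m : ℕ}
    (hm : m ≠ 0) (hu : 0 < v (u - 1)) : ∃ r, r ^ m = u ∧ 0 < v (r - 1) := by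
  by_contra! h
  have hprod := v.map_prod_nonpos _ fun a ha => by
    obtain ⟨r, hr, rfl⟩ := Multiset.mem_map.mp ha
    rw [v.map_sub_swap]
    exact h r ((mem_nthRoots (Nat.pos_of_ne_zero hm)).mp hr)
  rw [← one_sub_eq_prod_nthRoots u hm, v.map_sub_swap] at hprod
  exact hprod.not_gt hu

theorem exists_pow_eq_map_sub_one_eq [IsAlgClosed K] {Γ₀ : Type*}
    [LinearOrderedAddCommMonoidWithTop Γ₀] (v : AddValuation K Γ₀) {u : K} {m : ℕ}
    (hm : v (m : K) = 0) (hu : 0 < v (u - 1)) : ∃ r, r ^ m = u ∧ v (r - 1) = v (u - 1) := by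
  have hm0 : m ≠ 0 := by
    rintro rfl
    simp only [Nat.cast_zero, map_zero] at hm
    exact (hu.trans_le le_top).ne' hm
  obtain ⟨r, rfl, hr⟩ := v.exists_pow_eq_map_sub_one_pos hm0 hu
  exact ⟨r, rfl, (v.map_pow_sub_one hm hr).symm⟩

end Field

end AddValuation

section NearOneSubgroup

variable {K : Type*} [Field K] (v : AddValuation K (WithTop ℚ)) (R : ℚ)

theorem nearOneSubgroup_one : NearOneSubgroup v R 1 :=
  ⟨v.map_one, by simp⟩

theorem nearOneSubgroup_mul {x y : K} (hx : NearOneSubgroup v R x)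
    (hy : NearOneSubgroup v R y) : NearOneSubgroup v R (x * y) := by
  refine ⟨by rw [v.map_mul, hx.1, hy.1, add_zero], ?_⟩
  rw [show x * y - 1 = x * (y - 1) + (x - 1) by ring]
  refine v.map_le_add ?_ hx.2
  rw [v.map_mul, hx.1, zero_add]
  exact hy.2

theorem nearOneSubgroup_inv {x : K} (hx : NearOneSubgroup v R x) :
    NearOneSubgroup v R x⁻¹ := by
  have hx0 : x ≠ 0 := v.ne_top_iff.mp (by simp [hx.1])
  refine ⟨by simp [hx.1], ?_⟩
  rw [show x⁻¹ - 1 = x⁻¹ * -(x - 1) by field_simp; ring, v.map_mul, v.map_neg]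
  simpa [hx.1] using hx.2

theorem nearOneSubgroup_exists_pow_eq [IsAlgClosed K] {u : K} (hu : NearOneSubgroup v R u)
    {m : ℕ} (hm : 0 < m) (hvm : v (m : K) = 0) : ∃ w, NearOneSubgroup v R w ∧ w ^ m = u := by
  by_cases hu1 : 0 < v (u - 1)
  · obtain ⟨w, rfl, hw⟩ := v.exists_pow_eq_map_sub_one_eq hvm hu1
    exact ⟨w, ⟨v.map_eq_zero_of_map_sub_one_pos (hw ▸ hu1), hw ▸ hu.2⟩, rfl⟩
  · obtain ⟨w, rfl⟩ := IsAlgClosed.exists_pow_nat_eq u hm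
    have hw : v w = 0 := v.map_eq_zero_of_map_pow_eq_zero hm.ne' hu.1
    have hw1 : 0 ≤ v (w - 1) := by simpa [hw] using v.map_sub w 1
    exact ⟨w, ⟨hw, hu.2.trans ((not_lt.mp hu1).trans hw1)⟩, rfl⟩

end NearOneSubgroup

theorem nearOne_divisible_subgroup_general
    {K : Type*} [Field K] [IsAlgClosed K] (v : K → WithTop ℚ)
    (hv0 : ∀ x : K, v x = ⊤ ↔ x = 0)
    (hvmul : ∀ x y : K, v (x * y) = v x + v y)
    (hvadd : ∀ x y : K, min (v x) (v y) ≤ v (x + y))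
    (hvint : ∀ m : ℤ, m ≠ 0 → v ((m : K)) = 0)
    (R : ℚ) :
    NearOneSubgroup v R 1 ∧
    (∀ x y : K, NearOneSubgroup v R x → NearOneSubgroup v R y → NearOneSubgroup v R (x * y)) ∧
    (∀ x : K, NearOneSubgroup v R x → NearOneSubgroup v R x⁻¹) ∧
    (∀ x : K, NearOneSubgroup v R x → ∀ m : ℕ, 0 < m →
      ∃ w : K, NearOneSubgroup v R w ∧ w ^ m = x) := by
  have hv1 : v 1 = 0 := by simpa using hvint 1 one_ne_zero
  let val : AddValuation K (WithTop ℚ) := .of v ((hv0 0).mpr rfl) hv1 hvadd hvmul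
  refine ⟨nearOneSubgroup_one val R, fun x y => nearOneSubgroup_mul val R,
    fun x => nearOneSubgroup_inv val R, fun x hx m hm => ?_⟩
  exact nearOneSubgroup_exists_pow_eq val R hx hm (by simpa using hvint m (by omega) : v m = 0)

/-- Let `K` be an algebraically closed field with a valuation
`v : K^* → ℚ` (encoded as `v : K → WithTop ℚ` with `v x = ⊤` iff `x = 0`) such that
`v n = 0` for every nonzero integer `n`.  For any rational `R ≥ 0`, the set
`U = {u ∈ K^* : v u = 0, v (u - 1) ≥ R}` is a subgroup of `K^*` which is divisible:
for every `u ∈ U` and every positive integer `m` there is `w ∈ U` with `w ^ m = u`. -/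
theorem nearOne_divisible_subgroup
    {K : Type*} [Field K] [IsAlgClosed K] (v : K → WithTop ℚ)
    (hv0 : ∀ x : K, v x = ⊤ ↔ x = 0)
    (hvmul : ∀ x y : K, v (x * y) = v x + v y)
    (hvadd : ∀ x y : K, min (v x) (v y) ≤ v (x + y))
    (hvint : ∀ m : ℤ, m ≠ 0 → v ((m : K)) = 0)
    (R : ℚ) (hR : 0 ≤ R) :
    NearOneSubgroup v R 1 ∧
    (∀ x y : K, NearOneSubgroup v R x → NearOneSubgroup v R y → NearOneSubgroup v R (x * y)) ∧
    (∀ x : K, NearOneSubgroup v R x → NearOneSubgroup v R x⁻¹) ∧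
    (∀ x : K, NearOneSubgroup v R x → ∀ m : ℕ, 0 < m →
      ∃ w : K, NearOneSubgroup v R w ∧ w ^ m = x) :=
  nearOne_divisible_subgroup_general v hv0 hvmul hvadd hvint R
end

section
/- Let (ι, Γ, m) be a connected partial zero tension curve in ℚ^n, and suppose that the image ι(Γ ∖ ∂Γ) is not contained in any affine hyperplane of ℚ^n. Then the set of vectors σ_x(e), where x runs over the degree-one vertices of Γ and e over the edge of Γ ending at x, spans ℚ^n. -/
/-! Suppose the boundary vectors `σ_x(e)` lie in a hyperplane `{v | a ⬝ᵥ v = 0}`. Pairing the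
zero tension condition with `a` shows that `e ↦ m(e) (a ⬝ᵥ ρ(e))` is a conserved flow on the
bounded edges of `Γ`, while `h = a ⬝ᵥ ι` is a potential with
`h(dst e) - h(src e) = ℓ(e) (a ⬝ᵥ ρ(e))`. Summation by parts gives
`Σ_e m(e) ℓ(e) (a ⬝ᵥ ρ(e))² = 0`, so `h` is constant along every edge, hence constant on the
connected graph, and `ι(Γ ∖ ∂Γ)` lies in an affine hyperplane `{x | a ⬝ᵥ x = b}`. -/

/-- A vector of `ℤ^n` is primitive: nonzero, and its coordinates have no common factor. -/
def IsPrimitiveVec {n : ℕ} (ρ : Fin n → ℤ) : Prop :=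
  ρ ≠ 0 ∧ ∀ d : ℤ, (∀ i, d ∣ ρ i) → IsUnit d

/-- A combinatorial model of a *partial zero tension curve* `(ι, Γ, m)` in `ℚ^n`.
The interior vertices (the vertices of `Γ ∖ ∂Γ`) are `Fin V`, placed in `ℚ^n` by `pos`.
Bounded edges (both endpoints interior) are `Fin EB`; the edge `e` joins `bsrc e` to
`bdst e`, has primitive direction `bdir e` (or `0` if it is contracted to a point),
length `blen e` and multiplicity `mB e`.  Leaf edges (one endpoint a degree-one boundary
vertex of `Γ`) are `Fin EL`; the leaf edge `e` is attached to the interior vertex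
`lsrc e`, points in the primitive direction `ldir e`, has length `llen e ∈ ℚ ∪ {∞}`
(length `∞` means the edge is an unbounded ray, finite length means a finite segment,
as permitted for partial zero tension curves) and multiplicity `mL e`. -/
structure PartialZTC (n : ℕ) where
  V : ℕ
  EB : ℕ
  EL : ℕ
  pos : Fin V → Fin n → ℚ
  bsrc : Fin EB → Fin V
  bdst : Fin EB → Fin V
  bdir : Fin EB → Fin n → ℤ
  blen : Fin EB → ℚ
  mB : Fin EB → ℕ
  lsrc : Fin EL → Fin V
  ldir : Fin EL → Fin n → ℤ
  llen : Fin EL → WithTop ℚ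
  mL : Fin EL → ℕ

namespace PartialZTC

variable {n : ℕ} (C : PartialZTC n)

/-- Validity of the data: multiplicities are positive, directions are primitive (with
`bdir e = 0` exactly for contracted edges), leaf edges are nondegenerate, bounded edges
join their endpoints (`pos (bdst e) - pos (bsrc e) = blen e • bdir e`), and the zero
tension condition `Σ_{e ∋ u} m(e)·ρ_u(e) = 0` holds at every interior vertex `u`. -/
def Valid : Prop :=
  (∀ e, 0 < C.mB e) ∧ (∀ e, 0 < C.mL e) ∧
  (∀ e, IsPrimitiveVec (C.ldir e)) ∧
  (∀ e, 0 < C.llen e) ∧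
  (∀ e, (0 < C.blen e ∧ IsPrimitiveVec (C.bdir e)) ∨ (C.blen e = 0 ∧ C.bdir e = 0)) ∧
  (∀ e, (fun i => C.pos (C.bdst e) i - C.pos (C.bsrc e) i)
      = fun i => C.blen e * (C.bdir e i : ℚ)) ∧
  (∀ u : Fin C.V,
    (∑ e : Fin C.EB, (C.mB e : ℤ) •
        ((if C.bsrc e = u then C.bdir e else 0) + (if C.bdst e = u then -C.bdir e else 0)))
      + (∑ e : Fin C.EL, if C.lsrc e = u then (C.mL e : ℤ) • C.ldir e else 0) = 0)

/-- Two interior vertices are adjacent if some edge joins them. -/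
def Adj (u w : Fin C.V) : Prop :=
  ∃ e, (C.bsrc e = u ∧ C.bdst e = w) ∨ (C.bsrc e = w ∧ C.bdst e = u)

/-- The graph `Γ` is connected. -/
def Connected : Prop :=
  ∀ u w : Fin C.V, Relation.ReflTransGen C.Adj u w

/-- The image `ι(Γ ∖ ∂Γ) ⊆ ℚ^n`: the vertex positions together with the points of the
(closed) bounded edges and of the (half-open) leaf edges. -/
def ImageSet : Set (Fin n → ℚ) :=
  {x | (∃ u, x = C.pos u) ∨
    (∃ e, ∃ s : ℚ, 0 ≤ s ∧ s ≤ C.blen e ∧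
      x = fun i => C.pos (C.bsrc e) i + s * (C.bdir e i : ℚ)) ∨
    (∃ e, ∃ s : ℚ, 0 ≤ s ∧ (s : WithTop ℚ) < C.llen e ∧
      x = fun i => C.pos (C.lsrc e) i + s * (C.ldir e i : ℚ))}

end PartialZTC

theorem exists_ne_zero_dotProduct_eq_zero_of_span_ne_top {K ι : Type*} [Field K] [Fintype ι]
    [DecidableEq ι] {s : Set (ι → K)} (hs : Submodule.span K s ≠ ⊤) :
    ∃ a : ι → K, a ≠ 0 ∧ ∀ v ∈ s, a ⬝ᵥ v = 0 := by
  obtain ⟨f, hf, hker⟩ := (Submodule.span K s).exists_le_ker_of_lt_top hs.lt_top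
  refine ⟨(dotProductEquiv K ι).symm f, by simpa using hf, fun v hv => ?_⟩
  have hfv : f v = 0 := hker (Submodule.subset_span hv)
  rwa [← (dotProductEquiv K ι).apply_symm_apply f] at hfv

section Flow

variable {K V E : Type*} [Fintype V] [Fintype E] [DecidableEq V] (src dst : E → V)

def netOutflow [AddCommGroup K] (φ : E → K) (u : V) : K :=
  ∑ e, ((if src e = u then φ e else 0) - (if dst e = u then φ e else 0))

theorem sum_mul_sub_eq_neg_sum_mul_netOutflow [CommRing K] (φ : E → K) (g : V → K) :
    ∑ e, φ e * (g (dst e) - g (src e)) = -∑ u, g u * netOutflow src dst φ u := by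
  simp only [netOutflow, Finset.mul_sum, mul_sub, mul_ite, mul_zero]
  rw [Finset.sum_comm]
  simp [Finset.sum_sub_distrib, mul_comm]

theorem mul_eq_zero_of_netOutflow_eq_zero [CommRing K] [LinearOrder K] [IsStrictOrderedRing K]
    {src dst : E → V} {m ℓ A : E → K} {g : V → K} (hm : ∀ e, 0 < m e) (hℓ : ∀ e, 0 ≤ ℓ e)
    (hg : ∀ e, g (dst e) - g (src e) = ℓ e * A e)
    (hflow : ∀ u, netOutflow src dst (fun e => m e * A e) u = 0) (e : E) :
    ℓ e * A e = 0 := by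
  have henergy : ∑ e, m e * (ℓ e * A e ^ 2) = 0 := by
    calc ∑ e, m e * (ℓ e * A e ^ 2) = ∑ e, m e * A e * (g (dst e) - g (src e)) :=
          Finset.sum_congr rfl fun e _ => by rw [hg]; ring
      _ = 0 := by simp [sum_mul_sub_eq_neg_sum_mul_netOutflow, hflow]
  have hterm := (Finset.sum_eq_zero_iff_of_nonneg fun e _ =>
    mul_nonneg (hm e).le (mul_nonneg (hℓ e) (sq_nonneg (A e)))).mp henergy e (Finset.mem_univ e)
  rcases mul_eq_zero.mp ((mul_eq_zero.mp hterm).resolve_left (hm e).ne') with h | h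
  · rw [h, zero_mul]
  · rw [(pow_eq_zero_iff two_ne_zero).mp h, mul_zero]

end Flow

namespace PartialZTC

variable {n : ℕ} {C : PartialZTC n}

theorem Connected.eq_of_forall_adj {β : Type*} (hC : C.Connected) {f : Fin C.V → β}
    (hf : ∀ u w, C.Adj u w → f u = f w) (u w : Fin C.V) : f u = f w := by
  simpa [Relation.reflTransGen_eq_self] using (hC u w).lift f hf

variable (C) in
def bdirQ (e : Fin C.EB) : Fin n → ℚ := fun i => C.bdir e i

variable (C) in
def ldirQ (e : Fin C.EL) : Fin n → ℚ := fun i => C.ldir e i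

theorem dotProduct_eq_of_mem_imageSet {a : Fin n → ℚ} {b : ℚ} (hb : ∀ u, a ⬝ᵥ C.pos u = b)
    (hbdir : ∀ e, C.blen e * a ⬝ᵥ C.bdirQ e = 0) (hldir : ∀ e, a ⬝ᵥ C.ldirQ e = 0)
    {p : Fin n → ℚ} (hp : p ∈ C.ImageSet) : a ⬝ᵥ p = b := by
  rcases hp with ⟨u, rfl⟩ | ⟨e, s, hs₀, hs, rfl⟩ | ⟨e, s, -, -, rfl⟩
  · exact hb u
  · change a ⬝ᵥ (C.pos (C.bsrc e) + s • C.bdirQ e) = b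
    rw [dotProduct_add, dotProduct_smul, hb, smul_eq_mul]
    rcases mul_eq_zero.mp (hbdir e) with h | h
    · simp [le_antisymm (h ▸ hs) hs₀]
    · simp [h]
  · change a ⬝ᵥ (C.pos (C.lsrc e) + s • C.ldirQ e) = b
    rw [dotProduct_add, dotProduct_smul, hb, hldir, smul_zero, add_zero]

namespace Valid

theorem blen_nonneg (hC : C.Valid) (e : Fin C.EB) : 0 ≤ C.blen e := by
  rcases hC.2.2.2.2.1 e with ⟨h, -⟩ | ⟨h, -⟩
  exacts [h.le, h.ge]

theorem dotProduct_ldirQ_eq_zero (hC : C.Valid) {a : Fin n → ℚ} {e : Fin C.EL}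
    (ha : a ⬝ᵥ ((C.mL e : ℚ) • C.ldirQ e) = 0) : a ⬝ᵥ C.ldirQ e = 0 := by
  rw [dotProduct_smul, smul_eq_mul] at ha
  exact (mul_eq_zero.mp ha).resolve_left (Nat.cast_ne_zero.mpr (hC.2.1 e).ne')

theorem dotProduct_pos_sub_pos (hC : C.Valid) (a : Fin n → ℚ) (e : Fin C.EB) :
    a ⬝ᵥ C.pos (C.bdst e) - a ⬝ᵥ C.pos (C.bsrc e) = C.blen e * a ⬝ᵥ C.bdirQ e := by
  have hedge : C.pos (C.bdst e) - C.pos (C.bsrc e) = C.blen e • C.bdirQ e := hC.2.2.2.2.2.1 e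
  rw [← dotProduct_sub, hedge, dotProduct_smul, smul_eq_mul]

theorem netOutflow_dotProduct_bdirQ (hC : C.Valid) {a : Fin n → ℚ}
    (ha : ∀ e, a ⬝ᵥ C.ldirQ e = 0) (u : Fin C.V) :
    netOutflow C.bsrc C.bdst (fun e => (C.mB e : ℚ) * a ⬝ᵥ C.bdirQ e) u = 0 := by
  let pair : (Fin n → ℤ) →+ ℚ :=
    (dotProductEquiv ℚ (Fin n) a).toAddMonoidHom.comp ((Int.castAddHom ℚ).compLeft (Fin n))
  have hbdir : ∀ e, pair (C.bdir e) = a ⬝ᵥ C.bdirQ e := fun _ => rfl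
  have hldir : ∀ e, pair (C.ldir e) = a ⬝ᵥ C.ldirQ e := fun _ => rfl
  have h := congrArg pair (hC.2.2.2.2.2.2 u)
  simp only [map_add, map_sum, map_zsmul, apply_ite pair, map_neg, map_zero] at h
  simp only [hbdir, hldir, ha, smul_zero, ite_self, Finset.sum_const_zero, add_zero] at h
  simpa [netOutflow, mul_add, mul_ite, sub_eq_add_neg, neg_ite] using h

theorem blen_mul_dotProduct_bdirQ_eq_zero (hC : C.Valid) {a : Fin n → ℚ}
    (ha : ∀ e, a ⬝ᵥ C.ldirQ e = 0) (e : Fin C.EB) : C.blen e * a ⬝ᵥ C.bdirQ e = 0 :=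
  mul_eq_zero_of_netOutflow_eq_zero (g := fun u => a ⬝ᵥ C.pos u)
    (fun e => Nat.cast_pos.mpr (hC.1 e)) hC.blen_nonneg (hC.dotProduct_pos_sub_pos a) (hC.netOutflow_dotProduct_bdirQ ha) e

theorem dotProduct_pos_eq_of_adj (hC : C.Valid) {a : Fin n → ℚ} (ha : ∀ e, a ⬝ᵥ C.ldirQ e = 0)
    {u w : Fin C.V} (huw : C.Adj u w) : a ⬝ᵥ C.pos u = a ⬝ᵥ C.pos w := by
  obtain ⟨e, ⟨rfl, rfl⟩ | ⟨rfl, rfl⟩⟩ := huw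
  all_goals
    have h := hC.dotProduct_pos_sub_pos a e
    rw [hC.blen_mul_dotProduct_bdirQ_eq_zero ha e] at h
    linarith

end Valid

end PartialZTC

/-- Let `(ι, Γ, m)` be a connected partial zero tension curve in `ℚ^n`
whose image `ι(Γ ∖ ∂Γ)` is not contained in any affine hyperplane.  Then the vectors
`σ_x(e) = m(e)·ρ(e)`, where `x` runs over the degree-one vertices of `Γ` and `e` over the
edge of `Γ` ending at `x`, span `ℚ^n`. -/
theorem boundary_directions_span
    {n : ℕ} (C : PartialZTC n) (hval : C.Valid) (hconn : C.Connected)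
    (hnohyp : ¬ ∃ (a : Fin n → ℚ) (b : ℚ), a ≠ 0 ∧
      ∀ p ∈ C.ImageSet, ∑ i, a i * p i = b) :
    Submodule.span ℚ
      {x : Fin n → ℚ | ∃ e : Fin C.EL, x = fun i => (C.mL e : ℚ) * (C.ldir e i : ℚ)} = ⊤ := by
  by_contra hspan
  obtain ⟨a, ha, hleaf⟩ := exists_ne_zero_dotProduct_eq_zero_of_span_ne_top hspan
  have hldir : ∀ e, a ⬝ᵥ C.ldirQ e = 0 :=
    fun e => hval.dotProduct_ldirQ_eq_zero (hleaf _ ⟨e, rfl⟩)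
  obtain ⟨b, hb⟩ : ∃ b, ∀ u, a ⬝ᵥ C.pos u = b := by
    rcases isEmpty_or_nonempty (Fin C.V) with hV | ⟨⟨u₀⟩⟩
    · exact ⟨0, isEmptyElim⟩
    · exact ⟨_, fun u =>
        hconn.eq_of_forall_adj (fun _ _ => hval.dotProduct_pos_eq_of_adj hldir) u u₀⟩
  exact hnohyp ⟨a, b, ha, fun p hp => PartialZTC.dotProduct_eq_of_mem_imageSet hb
    (hval.blen_mul_dotProduct_bdirQ_eq_zero hldir) hldir hp⟩
end

section
/- Let (ι₀, Γ₀, m₀) be a zero tension curve in ℚ^n such that ι₀ restricted to Γ₀ ∖ ∂Γ₀ is a homeomorphism onto its image Δ, no edge of Γ₀ is contracted to a point by ι₀, every edge e of Γ₀ has m₀(e) = 1, and every vertex of Γ₀ has degree at most 3. Let (ι, Γ, m) be a zero tension curve with ι(Γ ∖ ∂Γ) = Δ, such that every edge of Γ is mapped by ι either to a point or onto the image of an edge of Γ₀, and such that for every edge e of Γ₀ the sum of m(f) over the edges f of Γ with ι(f) = ι₀(e) equals 1. Then the union Γ' of the edges of Γ that are not contracted to points by ι maps homeomorphically onto Δ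 under ι. -/
/-!
Each edge of `Δ` is the image of exactly one edge of `Γ`, and that edge is not contracted: the
multiplicities are positive and sum to `1`. Equal edge images have equal sets of endpoints, since
these are their extreme points. So `Γ'` can only fail to be embedded if two distinct vertices
`u ≠ w` of `Γ'` lie over one vertex `u₀` of `Γ₀`. By zero tension every vertex of `Γ'` carries
at least two non-contracted edges, and the edges at `u` and at `w` cover pairwise distinct edges
at `u₀`, so `u₀` would have degree at least `4`.
-/

open scoped Classical

/-- A combinatorial model of a *zero tension curve* `(ι, Γ, m)` in `ℚ^n`.
The interior vertices (the vertices of `Γ ∖ ∂Γ`) are `Fin V`, placed in `ℚ^n` by `pos`.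
Bounded edges (both endpoints interior) are `Fin EB`; the edge `e` joins `bsrc e` to
`bdst e`, has primitive direction `bdir e` (or `0` if it is contracted to a point),
length `blen e` and multiplicity `mB e`.  Unbounded edges (rays, with one endpoint a
degree-one boundary vertex of `Γ`) are `Fin ER`; the ray `e` is attached to the interior
vertex `rsrc e`, points in the primitive direction `rdir e` and has multiplicity `mR e`. -/
structure ZTC (n : ℕ) where
  V : ℕ
  EB : ℕ
  ER : ℕ
  pos : Fin V → Fin n → ℚ
  bsrc : Fin EB → Fin V
  bdst : Fin EB → Fin V
  bdir : Fin EB → Fin n → ℤ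
  blen : Fin EB → ℚ
  mB : Fin EB → ℕ
  rsrc : Fin ER → Fin V
  rdir : Fin ER → Fin n → ℤ
  mR : Fin ER → ℕ

namespace ZTC

variable {n : ℕ} (C : ZTC n)

/-- Validity of the data: multiplicities positive, directions primitive (with
`bdir e = 0` exactly for contracted edges), bounded edges join their endpoints, and the
zero tension condition holds at every interior vertex. -/
def Valid : Prop :=
  (∀ e, 0 < C.mB e) ∧ (∀ e, 0 < C.mR e) ∧
  (∀ e, IsPrimitiveVec (C.rdir e)) ∧
  (∀ e, (0 < C.blen e ∧ IsPrimitiveVec (C.bdir e)) ∨ (C.blen e = 0 ∧ C.bdir e = 0)) ∧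
  (∀ e, (fun i => C.pos (C.bdst e) i - C.pos (C.bsrc e) i)
      = fun i => C.blen e * (C.bdir e i : ℚ)) ∧
  (∀ u : Fin C.V,
    (∑ e : Fin C.EB, (C.mB e : ℤ) •
        ((if C.bsrc e = u then C.bdir e else 0) + (if C.bdst e = u then -C.bdir e else 0)))
      + (∑ e : Fin C.ER, if C.rsrc e = u then (C.mR e : ℤ) • C.rdir e else 0) = 0)

/-- Two interior vertices are adjacent if some bounded edge joins them. -/
def Adj (u w : Fin C.V) : Prop :=
  ∃ e, (C.bsrc e = u ∧ C.bdst e = w) ∨ (C.bsrc e = w ∧ C.bdst e = u)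

/-- The graph `Γ` is connected. -/
def Connected : Prop :=
  ∀ u w : Fin C.V, Relation.ReflTransGen C.Adj u w

/-- The set of points of the image of the (closed) bounded edge `e`. -/
def segPts (e : Fin C.EB) : Set (Fin n → ℚ) :=
  {x | ∃ s : ℚ, 0 ≤ s ∧ s ≤ C.blen e ∧
    x = fun i => C.pos (C.bsrc e) i + s * (C.bdir e i : ℚ)}

/-- The set of points of the image of the unbounded ray `e`. -/
def rayPts (e : Fin C.ER) : Set (Fin n → ℚ) :=
  {x | ∃ s : ℚ, 0 ≤ s ∧ x = fun i => C.pos (C.rsrc e) i + s * (C.rdir e i : ℚ)}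

/-- The union of the images of all edges of `Γ`, i.e. `ι(Γ ∖ ∂Γ)` when `Γ` has no
isolated vertices. -/
def EdgeImage : Set (Fin n → ℚ) :=
  (⋃ e : Fin C.EB, C.segPts e) ∪ ⋃ e : Fin C.ER, C.rayPts e

/-- `u` is an endpoint of the bounded edge `e`. -/
def IsEnd (e : Fin C.EB) (u : Fin C.V) : Prop := C.bsrc e = u ∨ C.bdst e = u

/-- The degree (valence) of the vertex `u` of `Γ`. -/
noncomputable def degree (u : Fin C.V) : ℕ :=
  (Finset.univ.filter fun e : Fin C.EB => C.bsrc e = u).card +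
  (Finset.univ.filter fun e : Fin C.EB => C.bdst e = u).card +
  (Finset.univ.filter fun e : Fin C.ER => C.rsrc e = u).card

/-- `ι` restricted to `Γ ∖ ∂Γ` is a homeomorphism onto its image: the vertex placement
is injective, distinct edges meet only in common endpoints, and a vertex lies on an edge
only if it is one of its endpoints. -/
def IsEmbedded : Prop :=
  Function.Injective C.pos ∧
  (∀ e f : Fin C.EB, e ≠ f → ∀ x ∈ C.segPts e ∩ C.segPts f,
    ∃ u, x = C.pos u ∧ C.IsEnd e u ∧ C.IsEnd f u) ∧
  (∀ (e : Fin C.EB) (f : Fin C.ER), ∀ x ∈ C.segPts e ∩ C.rayPts f,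
    ∃ u, x = C.pos u ∧ C.IsEnd e u ∧ C.rsrc f = u) ∧
  (∀ e f : Fin C.ER, e ≠ f → ∀ x ∈ C.rayPts e ∩ C.rayPts f,
    ∃ u, x = C.pos u ∧ C.rsrc e = u ∧ C.rsrc f = u) ∧
  (∀ (e : Fin C.EB) (u : Fin C.V), C.pos u ∈ C.segPts e → C.IsEnd e u) ∧
  (∀ (e : Fin C.ER) (u : Fin C.V), C.pos u ∈ C.rayPts e → C.rsrc e = u)

/-- The vertex `u` belongs to the subgraph `Γ'` of non-contracted edges. -/
def InGamma' (u : Fin C.V) : Prop :=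
  (∃ e : Fin C.EB, 0 < C.blen e ∧ C.IsEnd e u) ∨ (∃ e : Fin C.ER, C.rsrc e = u)

end ZTC

open Set

section ExtremePoints

variable {𝕜 E F : Type*} [Field 𝕜] [LinearOrder 𝕜] [IsStrictOrderedRing 𝕜]
  [AddCommGroup E] [Module 𝕜 E] [AddCommGroup F] [Module 𝕜 F]

theorem AffineMap.image_extremePoints_of_injective {f : E →ᵃ[𝕜] F} (hf : Function.Injective f)
    (s : Set E) : f '' s.extremePoints 𝕜 = (f '' s).extremePoints 𝕜 := by
  ext y
  constructor
  · rintro ⟨x, hx, rfl⟩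
    refine ⟨mem_image_of_mem f hx.1, ?_⟩
    rintro _ ⟨a, ha, rfl⟩ _ ⟨b, hb, rfl⟩ hab
    rw [← image_openSegment, hf.mem_set_image] at hab
    rw [hx.2 ha hb hab]
  · intro hy
    obtain ⟨x, hx, rfl⟩ := extremePoints_subset hy
    refine ⟨x, ⟨hx, fun a ha b hb hab => hf ?_⟩, rfl⟩
    refine hy.2 (mem_image_of_mem f ha) (mem_image_of_mem f hb) ?_
    rw [← image_openSegment]
    exact mem_image_of_mem f hab

theorem extremePoints_Icc_of_le {a b : 𝕜} (hab : a ≤ b) :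
    (Icc a b).extremePoints 𝕜 = {a, b} := by
  ext x
  simp only [mem_extremePoints_iff_forall_segment, segment_eq_uIcc, mem_uIcc, mem_Icc,
    mem_insert_iff, mem_singleton_iff]
  constructor
  · rintro ⟨hx, h⟩
    exact (h a ⟨le_rfl, hab⟩ b ⟨hab, le_rfl⟩ (Or.inl hx)).imp Eq.symm Eq.symm
  · rintro (rfl | rfl)
    · exact ⟨⟨le_rfl, hab⟩, fun x₁ h₁ x₂ h₂ hx => by grind⟩
    · exact ⟨⟨hab, le_rfl⟩, fun x₁ h₁ x₂ h₂ hx => by grind⟩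

theorem extremePoints_Ici (a : 𝕜) : (Ici a).extremePoints 𝕜 = {a} := by
  ext x
  simp only [mem_extremePoints_iff_forall_segment, segment_eq_uIcc, mem_uIcc, mem_Ici,
    mem_singleton_iff]
  constructor
  · rintro ⟨hax, h⟩
    rcases h a le_rfl (2 * x - a) (by linarith) (Or.inl ⟨hax, by linarith⟩) with h | h <;>
      linarith
  · rintro rfl
    exact ⟨le_rfl, fun x₁ h₁ x₂ h₂ hx => by grind⟩

theorem extremePoints_segment (x y : E) : (segment 𝕜 x y).extremePoints 𝕜 = {x, y} := by
  obtain rfl | hxy := eq_or_ne x y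
  · rw [segment_same, extremePoints_singleton, pair_eq_singleton]
  · rw [segment_eq_image_lineMap,
      ← AffineMap.image_extremePoints_of_injective (AffineMap.lineMap_injective 𝕜 hxy),
      extremePoints_Icc_of_le zero_le_one, image_pair, AffineMap.lineMap_apply_zero,
      AffineMap.lineMap_apply_one]

end ExtremePoints

lemma Finset.existsUnique_of_sum_filter_eq_one {α : Type*} [Fintype α] {p : α → Prop}
    [DecidablePred p] {m : α → ℕ} (hm : ∀ a, 0 < m a) (h : ∑ a ∈ Finset.univ.filter p, m a = 1) :
    ∃! a, p a := by
  have hle := Finset.card_nsmul_le_sum (Finset.univ.filter p) m 1 fun a _ => hm a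
  have hpos := (Finset.nonempty_of_sum_ne_zero (h ▸ one_ne_zero)).card_pos
  rw [smul_eq_mul, mul_one, h] at hle
  simpa using Finset.card_eq_one_iff_existsUnique.1 (le_antisymm hle hpos)

namespace ZTC

variable {n : ℕ} {C C' C₀ : ZTC n}

lemma Valid.mB_pos (hval : C.Valid) (f : Fin C.EB) : 0 < C.mB f := hval.1 f

lemma Valid.mR_pos (hval : C.Valid) (r : Fin C.ER) : 0 < C.mR r := hval.2.1 r

lemma Valid.rdir_ne_zero (hval : C.Valid) (r : Fin C.ER) : C.rdir r ≠ 0 := (hval.2.2.1 r).1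

lemma Valid.bdir_ne_zero (hval : C.Valid) {f : Fin C.EB} (hf : 0 < C.blen f) : C.bdir f ≠ 0 :=
  ((hval.2.2.2.1 f).resolve_right fun h => hf.ne' h.1).2.1

lemma Valid.bdir_eq_zero (hval : C.Valid) {f : Fin C.EB} (hf : ¬0 < C.blen f) : C.bdir f = 0 :=
  ((hval.2.2.2.1 f).resolve_left fun h => hf h.1).2

lemma Valid.blen_nonneg (hval : C.Valid) (f : Fin C.EB) : 0 ≤ C.blen f := by
  rcases hval.2.2.2.1 f with h | h
  · exact h.1.le
  · exact h.1.ge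

lemma Valid.pos_bdst (hval : C.Valid) (f : Fin C.EB) :
    C.pos (C.bdst f) = C.pos (C.bsrc f) + C.blen f • fun i => (C.bdir f i : ℚ) := by
  rw [← sub_eq_iff_eq_add']
  exact hval.2.2.2.2.1 f

lemma Valid.blen_pos_iff (hval : C.Valid) (f : Fin C.EB) :
    0 < C.blen f ↔ C.pos (C.bsrc f) ≠ C.pos (C.bdst f) := by
  rw [hval.pos_bdst, ne_eq, left_eq_add, smul_eq_zero, not_or]
  refine ⟨fun hf => ⟨hf.ne', fun h => hval.bdir_ne_zero hf ?_⟩, fun h => ?_⟩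
  · ext i
    simpa using congrFun h i
  · exact (hval.blen_nonneg f).lt_of_ne' h.1

lemma Valid.bsrc_ne_bdst (hval : C.Valid) {f : Fin C.EB} (hf : 0 < C.blen f) :
    C.bsrc f ≠ C.bdst f := fun h => (hval.blen_pos_iff f).1 hf (congrArg C.pos h)

lemma segPts_eq_image (f : Fin C.EB) :
    C.segPts f = AffineMap.lineMap (C.pos (C.bsrc f)) (C.pos (C.bsrc f) + fun i => (C.bdir f i : ℚ))
      '' Icc 0 (C.blen f) := by
  ext x
  simp only [segPts, mem_ofPred_eq, mem_image, mem_Icc, AffineMap.lineMap_apply_module',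
    add_sub_cancel_left, and_assoc, eq_comm (a := x)]
  congr! with s i
  simp [add_comm]

lemma rayPts_eq_image (r : Fin C.ER) :
    C.rayPts r = AffineMap.lineMap (C.pos (C.rsrc r)) (C.pos (C.rsrc r) + fun i => (C.rdir r i : ℚ))
      '' Ici (0 : ℚ) := by
  ext x
  simp only [rayPts, mem_ofPred_eq, mem_image, mem_Ici, AffineMap.lineMap_apply_module',
    add_sub_cancel_left, eq_comm (a := x)]
  congr! with s i
  simp [add_comm]

lemma Valid.segPts_eq_segment (hval : C.Valid) (f : Fin C.EB) :
    C.segPts f = segment ℚ (C.pos (C.bsrc f)) (C.pos (C.bdst f)) := by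
  rw [segPts_eq_image, ← segment_eq_Icc (hval.blen_nonneg f), image_segment,
    AffineMap.lineMap_apply_zero, hval.pos_bdst, AffineMap.lineMap_apply_module', add_comm]
  simp

lemma Valid.extremePoints_segPts (hval : C.Valid) (f : Fin C.EB) :
    (C.segPts f).extremePoints ℚ = {C.pos (C.bsrc f), C.pos (C.bdst f)} := by
  rw [hval.segPts_eq_segment, extremePoints_segment]

lemma Valid.extremePoints_rayPts (hval : C.Valid) (r : Fin C.ER) :
    (C.rayPts r).extremePoints ℚ = {C.pos (C.rsrc r)} := by
  have hne : C.pos (C.rsrc r) ≠ C.pos (C.rsrc r) + fun i => (C.rdir r i : ℚ) := by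
    rw [ne_eq, left_eq_add]
    intro h
    apply hval.rdir_ne_zero r
    ext i
    simpa using congrFun h i
  rw [rayPts_eq_image, ← AffineMap.image_extremePoints_of_injective
    (AffineMap.lineMap_injective ℚ hne), extremePoints_Ici, image_singleton,
    AffineMap.lineMap_apply_zero]

lemma inGamma'_of_isEnd {f : Fin C.EB} {u : Fin C.V} (hf : 0 < C.blen f) (hu : C.IsEnd f u) :
    C.InGamma' u :=
  Or.inl ⟨f, hf, hu⟩

lemma inGamma'_rsrc (r : Fin C.ER) : C.InGamma' (C.rsrc r) :=
  Or.inr ⟨r, rfl⟩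

lemma Valid.exists_isEnd_of_segPts_eq (hval : C.Valid) (hval' : C'.Valid) {f : Fin C.EB}
    {e : Fin C'.EB} (h : C.segPts f = C'.segPts e) {u : Fin C'.V} (hu : C'.IsEnd e u) :
    ∃ v, C.IsEnd f v ∧ C.pos v = C'.pos u := by
  have hends := congrArg (extremePoints ℚ) h
  rw [hval.extremePoints_segPts, hval'.extremePoints_segPts] at hends
  have hmem : C'.pos u ∈ ({C.pos (C.bsrc f), C.pos (C.bdst f)} : Set (Fin n → ℚ)) := by
    rw [hends]
    rcases hu with rfl | rfl <;> simp
  rcases hmem with h | h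
  · exact ⟨C.bsrc f, Or.inl rfl, h.symm⟩
  · exact ⟨C.bdst f, Or.inr rfl, h.symm⟩

lemma Valid.blen_pos_of_segPts_eq (hval : C.Valid) (hval' : C'.Valid) {f : Fin C.EB}
    {e : Fin C'.EB} (h : C.segPts f = C'.segPts e) (he : 0 < C'.blen e) : 0 < C.blen f := by
  have hends := congrArg (extremePoints ℚ) h
  rw [hval.extremePoints_segPts, hval'.extremePoints_segPts] at hends
  rw [hval.blen_pos_iff]
  intro hf
  rw [hf, Set.pair_eq_pair_iff] at hends
  exact (hval'.blen_pos_iff e).1 he (by grind)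

lemma Valid.pos_rsrc_eq_of_rayPts_eq (hval : C.Valid) (hval' : C'.Valid) {r : Fin C.ER}
    {e : Fin C'.ER} (h : C.rayPts r = C'.rayPts e) : C.pos (C.rsrc r) = C'.pos (C'.rsrc e) := by
  have hsrc := congrArg (extremePoints ℚ) h
  rwa [hval.extremePoints_rayPts, hval'.extremePoints_rayPts, singleton_eq_singleton_iff] at hsrc

noncomputable def starB (v : Fin C.V) : Finset (Fin C.EB) :=
  Finset.univ.filter fun f => 0 < C.blen f ∧ C.IsEnd f v

noncomputable def starR (v : Fin C.V) : Finset (Fin C.ER) :=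
  Finset.univ.filter fun r => C.rsrc r = v

@[simp]
lemma mem_starB {v : Fin C.V} {f : Fin C.EB} : f ∈ C.starB v ↔ 0 < C.blen f ∧ C.IsEnd f v := by
  rw [starB, Finset.mem_filter, and_iff_right (Finset.mem_univ f)]

@[simp]
lemma mem_starR {v : Fin C.V} {r : Fin C.ER} : r ∈ C.starR v ↔ C.rsrc r = v := by
  rw [starR, Finset.mem_filter, and_iff_right (Finset.mem_univ r)]

lemma card_starB_add_card_starR_le_degree (v : Fin C.V) :
    (C.starB v).card + (C.starR v).card ≤ C.degree v := by
  have hsub : C.starB v ⊆ (Finset.univ.filter fun f => C.bsrc f = v) ∪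
      Finset.univ.filter fun f => C.bdst f = v := by
    intro f hf
    simpa [IsEnd] using (mem_starB.1 hf).2
  have := (Finset.card_le_card hsub).trans (Finset.card_union_le _ _)
  unfold degree starR
  omega

lemma Valid.sum_starB_add_sum_starR_eq_zero (hval : C.Valid) (v : Fin C.V) :
    ∑ f ∈ C.starB v, (C.mB f : ℤ) • (if C.bsrc f = v then C.bdir f else -C.bdir f) +
      ∑ r ∈ C.starR v, (C.mR r : ℤ) • C.rdir r = 0 := by
  rw [← hval.2.2.2.2.2 v, starB, starR, Finset.sum_filter, Finset.sum_filter]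
  congr 1
  refine Finset.sum_congr rfl fun f _ => ?_
  by_cases hf : 0 < C.blen f
  · have := hval.bsrc_ne_bdst hf
    by_cases h₁ : C.bsrc f = v <;> by_cases h₂ : C.bdst f = v <;> simp_all [IsEnd]
  · simp [hf, hval.bdir_eq_zero hf]

lemma Valid.two_le_card_star (hval : C.Valid) {v : Fin C.V} (hv : C.InGamma' v) :
    2 ≤ (C.starB v).card + (C.starR v).card := by
  have hpos : 0 < (C.starB v).card + (C.starR v).card := by
    rcases hv with ⟨f, hf, hfv⟩ | ⟨r, rfl⟩
    · have := Finset.card_pos.2 ⟨f, mem_starB.2 ⟨hf, hfv⟩⟩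
      omega
    · have := Finset.card_pos.2 ⟨r, mem_starR.2 rfl⟩
      omega
  by_contra! hlt
  have htension := hval.sum_starB_add_sum_starR_eq_zero v
  obtain ⟨hB, hR⟩ | ⟨hB, hR⟩ : ((C.starB v).card = 1 ∧ (C.starR v).card = 0) ∨
      ((C.starB v).card = 0 ∧ (C.starR v).card = 1) := by omega
  · obtain ⟨f, hBf⟩ := Finset.card_eq_one.1 hB
    have hf : 0 < C.blen f := (mem_starB.1 (hBf ▸ Finset.mem_singleton_self f)).1
    rw [hBf, Finset.card_eq_zero.1 hR, Finset.sum_singleton, Finset.sum_empty, add_zero] at htension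
    refine smul_ne_zero (by exact_mod_cast (hval.mB_pos f).ne') ?_ htension
    split_ifs
    · exact hval.bdir_ne_zero hf
    · exact neg_ne_zero.2 (hval.bdir_ne_zero hf)
  · obtain ⟨r, hRr⟩ := Finset.card_eq_one.1 hR
    rw [Finset.card_eq_zero.1 hB, hRr, Finset.sum_singleton, Finset.sum_empty, zero_add] at htension
    exact smul_ne_zero (by exact_mod_cast (hval.mR_pos r).ne') (hval.rdir_ne_zero r) htension

lemma Valid.disjoint_starB (hval : C.Valid) {u w : Fin C.V} (huw : u ≠ w)
    (hpos : C.pos u = C.pos w) : Disjoint (C.starB u) (C.starB w) := by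
  rw [Finset.disjoint_left]
  intro f hfu hfw
  rw [mem_starB] at hfu hfw
  have hne := (hval.blen_pos_iff f).1 hfu.1
  rcases hfu.2 with hu | hu <;> rcases hfw.2 with hw | hw
  · exact huw (hu.symm.trans hw)
  · exact hne (by rw [hu, hw, hpos])
  · exact hne (by rw [hu, hw, hpos])
  · exact huw (hu.symm.trans hw)

lemma disjoint_starR {u w : Fin C.V} (huw : u ≠ w) : Disjoint (C.starR u) (C.starR w) := by
  rw [Finset.disjoint_left]
  intro r hru hrw
  rw [mem_starR] at hru hrw
  exact huw (hru.symm.trans hrw)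

structure CoversOnce (C C₀ : ZTC n) : Prop where
  exists_segPts_eq : ∀ f, 0 < C.blen f → ∃ e, C.segPts f = C₀.segPts e
  existsUnique_segPts_eq : ∀ e, ∃! f, C.segPts f = C₀.segPts e
  exists_rayPts_eq : ∀ r, ∃ e, C.rayPts r = C₀.rayPts e
  existsUnique_rayPts_eq : ∀ e, ∃! r, C.rayPts r = C₀.rayPts e

lemma Valid.coversOnce (hval : C.Valid)
    (hmapseg : ∀ f, C.blen f = 0 ∨ ∃ e : Fin C₀.EB, C.segPts f = C₀.segPts e)
    (hmapray : ∀ r, ∃ e : Fin C₀.ER, C.rayPts r = C₀.rayPts e)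
    (hsumseg : ∀ e : Fin C₀.EB,
      ∑ f ∈ Finset.univ.filter (fun f : Fin C.EB => C.segPts f = C₀.segPts e), C.mB f = 1)
    (hsumray : ∀ e : Fin C₀.ER,
      ∑ r ∈ Finset.univ.filter (fun r : Fin C.ER => C.rayPts r = C₀.rayPts e), C.mR r = 1) :
    C.CoversOnce C₀ where
  exists_segPts_eq f hf := (hmapseg f).resolve_left hf.ne'
  existsUnique_segPts_eq e := Finset.existsUnique_of_sum_filter_eq_one hval.mB_pos (hsumseg e)
  exists_rayPts_eq := hmapray
  existsUnique_rayPts_eq e := Finset.existsUnique_of_sum_filter_eq_one hval.mR_pos (hsumray e)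

namespace CoversOnce

lemma exists_pos_eq (hcov : C.CoversOnce C₀) (hval : C.Valid) (hval₀ : C₀.Valid) {u : Fin C.V}
    (hu : C.InGamma' u) : ∃ u₀, C.pos u = C₀.pos u₀ := by
  rcases hu with ⟨f, hf, hfu⟩ | ⟨r, rfl⟩
  · obtain ⟨e, he⟩ := hcov.exists_segPts_eq f hf
    obtain ⟨u₀, -, hu₀⟩ := hval₀.exists_isEnd_of_segPts_eq hval he.symm hfu
    exact ⟨u₀, hu₀.symm⟩
  · obtain ⟨e, he⟩ := hcov.exists_rayPts_eq r
    exact ⟨C₀.rsrc e, hval.pos_rsrc_eq_of_rayPts_eq hval₀ he⟩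

lemma card_starB_union_le (hcov : C.CoversOnce C₀) (hval : C.Valid) (hval₀ : C₀.Valid)
    (hinj₀ : Function.Injective C₀.pos) {u w : Fin C.V} {u₀ : Fin C₀.V}
    (hu : C.pos u = C₀.pos u₀) (hw : C.pos w = C₀.pos u₀) :
    (C.starB u ∪ C.starB w).card ≤ (C₀.starB u₀).card := by
  refine Finset.card_le_card_of_forall_subsingleton (fun f e => C.segPts f = C₀.segPts e)
    (fun f hf => ?_) fun e _ f₁ hf₁ f₂ hf₂ => (hcov.existsUnique_segPts_eq e).unique hf₁.2 hf₂.2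
  obtain ⟨v, hv, hfv⟩ : ∃ v, C.pos v = C₀.pos u₀ ∧ f ∈ C.starB v := by
    rcases Finset.mem_union.1 hf with hf | hf
    exacts [⟨u, hu, hf⟩, ⟨w, hw, hf⟩]
  obtain ⟨hflen, hfv⟩ := mem_starB.1 hfv
  obtain ⟨e, he⟩ := hcov.exists_segPts_eq f hflen
  obtain ⟨v₀, hev₀, hv₀⟩ := hval₀.exists_isEnd_of_segPts_eq hval he.symm hfv
  refine ⟨e, mem_starB.2 ⟨hval₀.blen_pos_of_segPts_eq hval he.symm hflen, ?_⟩, he⟩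
  rwa [← hinj₀ (hv₀.trans hv)]

lemma card_starR_union_le (hcov : C.CoversOnce C₀) (hval : C.Valid) (hval₀ : C₀.Valid)
    (hinj₀ : Function.Injective C₀.pos) {u w : Fin C.V} {u₀ : Fin C₀.V}
    (hu : C.pos u = C₀.pos u₀) (hw : C.pos w = C₀.pos u₀) :
    (C.starR u ∪ C.starR w).card ≤ (C₀.starR u₀).card := by
  refine Finset.card_le_card_of_forall_subsingleton (fun r e => C.rayPts r = C₀.rayPts e)
    (fun r hr => ?_) fun e _ r₁ hr₁ r₂ hr₂ => (hcov.existsUnique_rayPts_eq e).unique hr₁.2 hr₂.2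
  obtain ⟨e, he⟩ := hcov.exists_rayPts_eq r
  refine ⟨e, mem_starR.2 (hinj₀ ?_), he⟩
  rw [← hval.pos_rsrc_eq_of_rayPts_eq hval₀ he]
  rcases Finset.mem_union.1 hr with hr | hr <;> rw [mem_starR.1 hr]
  exacts [hu, hw]

theorem injOn_pos (hcov : C.CoversOnce C₀) (hval : C.Valid) (hval₀ : C₀.Valid)
    (hinj₀ : Function.Injective C₀.pos) (hdeg₀ : ∀ u, C₀.degree u ≤ 3) :
    Set.InjOn C.pos {u | C.InGamma' u} := by
  intro u hu w hw hpos
  by_contra huw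
  obtain ⟨u₀, hu₀⟩ := hcov.exists_pos_eq hval hval₀ hu
  have hB := hcov.card_starB_union_le hval hval₀ hinj₀ hu₀ (hpos ▸ hu₀)
  have hR := hcov.card_starR_union_le hval hval₀ hinj₀ hu₀ (hpos ▸ hu₀)
  rw [Finset.card_union_of_disjoint (hval.disjoint_starB huw hpos)] at hB
  rw [Finset.card_union_of_disjoint (disjoint_starR huw)] at hR
  have := hval.two_le_card_star hu
  have := hval.two_le_card_star hw
  have := C₀.card_starB_add_card_starR_le_degree u₀
  have := hdeg₀ u₀
  omega

lemma exists_isEnd_of_mem_segPts_inter (hcov : C.CoversOnce C₀) (hval : C.Valid)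
    (hval₀ : C₀.Valid) (hemb₀ : C₀.IsEmbedded) (hinj : Set.InjOn C.pos {u | C.InGamma' u})
    {f g : Fin C.EB} (hf : 0 < C.blen f) (hg : 0 < C.blen g) (hfg : f ≠ g) {x : Fin n → ℚ}
    (hx : x ∈ C.segPts f ∩ C.segPts g) : ∃ u, x = C.pos u ∧ C.IsEnd f u ∧ C.IsEnd g u := by
  obtain ⟨e, he⟩ := hcov.exists_segPts_eq f hf
  obtain ⟨e', he'⟩ := hcov.exists_segPts_eq g hg
  have hee' : e ≠ e' := by
    rintro rfl
    exact hfg ((hcov.existsUnique_segPts_eq e).unique he he')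
  obtain ⟨u₀, rfl, hu₀e, hu₀e'⟩ := hemb₀.2.1 e e' hee' x ⟨he ▸ hx.1, he' ▸ hx.2⟩
  obtain ⟨v, hfv, hv⟩ := hval.exists_isEnd_of_segPts_eq hval₀ he hu₀e
  obtain ⟨w, hgw, hw⟩ := hval.exists_isEnd_of_segPts_eq hval₀ he' hu₀e'
  obtain rfl : v = w :=
    hinj (inGamma'_of_isEnd hf hfv) (inGamma'_of_isEnd hg hgw) (hv.trans hw.symm)
  exact ⟨v, hv.symm, hfv, hgw⟩

lemma exists_isEnd_of_mem_segPts_inter_rayPts (hcov : C.CoversOnce C₀) (hval : C.Valid)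
    (hval₀ : C₀.Valid) (hemb₀ : C₀.IsEmbedded) (hinj : Set.InjOn C.pos {u | C.InGamma' u})
    {f : Fin C.EB} {g : Fin C.ER} (hf : 0 < C.blen f) {x : Fin n → ℚ}
    (hx : x ∈ C.segPts f ∩ C.rayPts g) : ∃ u, x = C.pos u ∧ C.IsEnd f u ∧ C.rsrc g = u := by
  obtain ⟨e, he⟩ := hcov.exists_segPts_eq f hf
  obtain ⟨e', he'⟩ := hcov.exists_rayPts_eq g
  obtain ⟨u₀, rfl, hu₀e, hu₀e'⟩ := hemb₀.2.2.1 e e' x ⟨he ▸ hx.1, he' ▸ hx.2⟩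
  obtain ⟨v, hfv, hv⟩ := hval.exists_isEnd_of_segPts_eq hval₀ he hu₀e
  have hgv : C.rsrc g = v := hinj (inGamma'_rsrc g) (inGamma'_of_isEnd hf hfv)
    ((hval.pos_rsrc_eq_of_rayPts_eq hval₀ he').trans (hu₀e' ▸ hv.symm))
  exact ⟨v, hv.symm, hfv, hgv⟩

lemma exists_rsrc_of_mem_rayPts_inter (hcov : C.CoversOnce C₀) (hval : C.Valid)
    (hval₀ : C₀.Valid) (hemb₀ : C₀.IsEmbedded) (hinj : Set.InjOn C.pos {u | C.InGamma' u})
    {f g : Fin C.ER} (hfg : f ≠ g) {x : Fin n → ℚ} (hx : x ∈ C.rayPts f ∩ C.rayPts g) :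
    ∃ u, x = C.pos u ∧ C.rsrc f = u ∧ C.rsrc g = u := by
  obtain ⟨e, he⟩ := hcov.exists_rayPts_eq f
  obtain ⟨e', he'⟩ := hcov.exists_rayPts_eq g
  have hee' : e ≠ e' := by
    rintro rfl
    exact hfg ((hcov.existsUnique_rayPts_eq e).unique he he')
  obtain ⟨u₀, rfl, hu₀e, hu₀e'⟩ := hemb₀.2.2.2.1 e e' hee' x ⟨he ▸ hx.1, he' ▸ hx.2⟩
  have hf := hval.pos_rsrc_eq_of_rayPts_eq hval₀ he
  have hg := hval.pos_rsrc_eq_of_rayPts_eq hval₀ he'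
  rw [hu₀e] at hf
  rw [hu₀e'] at hg
  exact ⟨C.rsrc f, hf.symm, rfl, (hinj (inGamma'_rsrc f) (inGamma'_rsrc g) (hf.trans hg.symm)).symm⟩

lemma isEnd_of_pos_mem_segPts (hcov : C.CoversOnce C₀) (hval : C.Valid) (hval₀ : C₀.Valid)
    (hemb₀ : C₀.IsEmbedded) (hinj : Set.InjOn C.pos {u | C.InGamma' u}) {f : Fin C.EB}
    {u : Fin C.V} (hf : 0 < C.blen f) (hu : C.InGamma' u) (hmem : C.pos u ∈ C.segPts f) :
    C.IsEnd f u := by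
  obtain ⟨e, he⟩ := hcov.exists_segPts_eq f hf
  obtain ⟨u₀, hu₀⟩ := hcov.exists_pos_eq hval hval₀ hu
  obtain ⟨v, hfv, hv⟩ :=
    hval.exists_isEnd_of_segPts_eq hval₀ he (hemb₀.2.2.2.2.1 e u₀ (hu₀ ▸ he ▸ hmem))
  rwa [hinj hu (inGamma'_of_isEnd hf hfv) (hu₀.trans hv.symm)]

lemma rsrc_eq_of_pos_mem_rayPts (hcov : C.CoversOnce C₀) (hval : C.Valid) (hval₀ : C₀.Valid)
    (hemb₀ : C₀.IsEmbedded) (hinj : Set.InjOn C.pos {u | C.InGamma' u}) {f : Fin C.ER}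
    {u : Fin C.V} (hu : C.InGamma' u) (hmem : C.pos u ∈ C.rayPts f) : C.rsrc f = u := by
  obtain ⟨e, he⟩ := hcov.exists_rayPts_eq f
  obtain ⟨u₀, hu₀⟩ := hcov.exists_pos_eq hval hval₀ hu
  have hsrc := hemb₀.2.2.2.2.2 e u₀ (hu₀ ▸ he ▸ hmem)
  exact hinj (inGamma'_rsrc f) hu ((hval.pos_rsrc_eq_of_rayPts_eq hval₀ he).trans (hsrc ▸ hu₀.symm))

lemma image_eq_edgeImage (hcov : C.CoversOnce C₀) (hval : C.Valid) (hval₀ : C₀.Valid)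
    (hnocontr₀ : ∀ e, 0 < C₀.blen e) :
    (⋃ f ∈ {f : Fin C.EB | 0 < C.blen f}, C.segPts f) ∪ (⋃ f : Fin C.ER, C.rayPts f) =
      C₀.EdgeImage := by
  rw [EdgeImage]
  refine congrArg₂ (· ∪ ·) (subset_antisymm ?_ ?_) (subset_antisymm ?_ ?_)
  · refine iUnion₂_subset fun f hf => ?_
    obtain ⟨e, he⟩ := hcov.exists_segPts_eq f hf
    exact he ▸ subset_iUnion C₀.segPts e
  · refine iUnion_subset fun e => ?_
    obtain ⟨f, hf, -⟩ := hcov.existsUnique_segPts_eq e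
    exact hf ▸ subset_iUnion₂_of_subset f (hval.blen_pos_of_segPts_eq hval₀ hf (hnocontr₀ e)) le_rfl
  · refine iUnion_subset fun f => ?_
    obtain ⟨e, he⟩ := hcov.exists_rayPts_eq f
    exact he ▸ subset_iUnion C₀.rayPts e
  · refine iUnion_subset fun e => ?_
    obtain ⟨f, hf, -⟩ := hcov.existsUnique_rayPts_eq e
    exact hf ▸ subset_iUnion C.rayPts f

end CoversOnce

end ZTC

theorem trivalent_subgraph_homeomorphism_general
    {n : ℕ} (C₀ C : ZTC n)
    (hval₀ : C₀.Valid)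
    (hemb₀ : C₀.IsEmbedded)
    (hnocontr₀ : ∀ e, 0 < C₀.blen e)
    (hdeg₀ : ∀ u, C₀.degree u ≤ 3)
    (hval : C.Valid)
    (hmapseg : ∀ f : Fin C.EB, C.blen f = 0 ∨ ∃ e : Fin C₀.EB, C.segPts f = C₀.segPts e)
    (hmapray : ∀ f : Fin C.ER, ∃ e : Fin C₀.ER, C.rayPts f = C₀.rayPts e)
    (hsumseg : ∀ e : Fin C₀.EB,
      (∑ f ∈ Finset.univ.filter (fun f : Fin C.EB => C.segPts f = C₀.segPts e), C.mB f) = 1)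
    (hsumray : ∀ e : Fin C₀.ER,
      (∑ f ∈ Finset.univ.filter (fun f : Fin C.ER => C.rayPts f = C₀.rayPts e), C.mR f) = 1) :
    (∀ u w : Fin C.V, C.InGamma' u → C.InGamma' w → C.pos u = C.pos w → u = w) ∧
    (∀ f g : Fin C.EB, 0 < C.blen f → 0 < C.blen g → f ≠ g →
      ∀ x ∈ C.segPts f ∩ C.segPts g, ∃ u, x = C.pos u ∧ C.IsEnd f u ∧ C.IsEnd g u) ∧
    (∀ (f : Fin C.EB) (g : Fin C.ER), 0 < C.blen f →
      ∀ x ∈ C.segPts f ∩ C.rayPts g, ∃ u, x = C.pos u ∧ C.IsEnd f u ∧ C.rsrc g = u) ∧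
    (∀ f g : Fin C.ER, f ≠ g →
      ∀ x ∈ C.rayPts f ∩ C.rayPts g, ∃ u, x = C.pos u ∧ C.rsrc f = u ∧ C.rsrc g = u) ∧
    (∀ (f : Fin C.EB) (u : Fin C.V), 0 < C.blen f → C.InGamma' u →
      C.pos u ∈ C.segPts f → C.IsEnd f u) ∧
    (∀ (f : Fin C.ER) (u : Fin C.V), C.InGamma' u →
      C.pos u ∈ C.rayPts f → C.rsrc f = u) ∧
    ((⋃ f ∈ {f : Fin C.EB | 0 < C.blen f}, C.segPts f) ∪ (⋃ f : Fin C.ER, C.rayPts f)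
      = C₀.EdgeImage) := by
  have hcov := hval.coversOnce hmapseg hmapray hsumseg hsumray
  have hinj := hcov.injOn_pos hval hval₀ hemb₀.1 hdeg₀
  refine ⟨fun _ _ hu hw => hinj hu hw, fun f g hf hg hfg x hx => ?_,
    fun f g hf x hx => ?_, fun f g hfg x hx => ?_, fun f u hf hu hmem => ?_,
    fun f u hu hmem => ?_, hcov.image_eq_edgeImage hval hval₀ hnocontr₀⟩
  · exact hcov.exists_isEnd_of_mem_segPts_inter hval hval₀ hemb₀ hinj hf hg hfg hx
  · exact hcov.exists_isEnd_of_mem_segPts_inter_rayPts hval hval₀ hemb₀ hinj hf hx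
  · exact hcov.exists_rsrc_of_mem_rayPts_inter hval hval₀ hemb₀ hinj hfg hx
  · exact hcov.isEnd_of_pos_mem_segPts hval hval₀ hemb₀ hinj hf hu hmem
  · exact hcov.rsrc_eq_of_pos_mem_rayPts hval hval₀ hemb₀ hinj hu hmem

/-- Let `(ι₀, Γ₀, m₀)` be a zero tension curve in `ℚ^n` such that `ι₀`
is a homeomorphism of `Γ₀ ∖ ∂Γ₀` onto its image `Δ`, no edge is contracted, all
multiplicities are `1` and all vertices have degree at most `3`.  Let `(ι, Γ, m)` be a
zero tension curve with image `Δ`, each of whose edges is mapped to a point or onto the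
image of an edge of `Γ₀`, and such that for every edge `e` of `Γ₀` the multiplicities of
the edges of `Γ` mapping onto `ι₀(e)` sum to `1`.  Then the union `Γ'` of the
non-contracted edges of `Γ` maps homeomorphically onto `Δ` under `ι`. -/
theorem trivalent_subgraph_homeomorphism
    {n : ℕ} (C₀ C : ZTC n)
    (hval₀ : C₀.Valid) (hconn₀ : C₀.Connected)
    (hemb₀ : C₀.IsEmbedded)
    (hnocontr₀ : ∀ e, 0 < C₀.blen e)
    (hm₀B : ∀ e, C₀.mB e = 1) (hm₀R : ∀ e, C₀.mR e = 1)
    (hdeg₀ : ∀ u, C₀.degree u ≤ 3)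
    (hval : C.Valid) (hconn : C.Connected)
    (himage : C.EdgeImage = C₀.EdgeImage)
    (hmapseg : ∀ f : Fin C.EB, C.blen f = 0 ∨ ∃ e : Fin C₀.EB, C.segPts f = C₀.segPts e)
    (hmapray : ∀ f : Fin C.ER, ∃ e : Fin C₀.ER, C.rayPts f = C₀.rayPts e)
    (hsumseg : ∀ e : Fin C₀.EB,
      (∑ f ∈ Finset.univ.filter (fun f : Fin C.EB => C.segPts f = C₀.segPts e), C.mB f) = 1)
    (hsumray : ∀ e : Fin C₀.ER,
      (∑ f ∈ Finset.univ.filter (fun f : Fin C.ER => C.rayPts f = C₀.rayPts e), C.mR f) = 1) :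
    (∀ u w : Fin C.V, C.InGamma' u → C.InGamma' w → C.pos u = C.pos w → u = w) ∧
    (∀ f g : Fin C.EB, 0 < C.blen f → 0 < C.blen g → f ≠ g →
      ∀ x ∈ C.segPts f ∩ C.segPts g, ∃ u, x = C.pos u ∧ C.IsEnd f u ∧ C.IsEnd g u) ∧
    (∀ (f : Fin C.EB) (g : Fin C.ER), 0 < C.blen f →
      ∀ x ∈ C.segPts f ∩ C.rayPts g, ∃ u, x = C.pos u ∧ C.IsEnd f u ∧ C.rsrc g = u) ∧
    (∀ f g : Fin C.ER, f ≠ g →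
      ∀ x ∈ C.rayPts f ∩ C.rayPts g, ∃ u, x = C.pos u ∧ C.rsrc f = u ∧ C.rsrc g = u) ∧
    (∀ (f : Fin C.EB) (u : Fin C.V), 0 < C.blen f → C.InGamma' u →
      C.pos u ∈ C.segPts f → C.IsEnd f u) ∧
    (∀ (f : Fin C.ER) (u : Fin C.V), C.InGamma' u →
      C.pos u ∈ C.rayPts f → C.rsrc f = u) ∧
    ((⋃ f ∈ {f : Fin C.EB | 0 < C.blen f}, C.segPts f) ∪ (⋃ f : Fin C.ER, C.rayPts f)
      = C₀.EdgeImage) :=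
  trivalent_subgraph_homeomorphism_general C₀ C hval₀ hemb₀ hnocontr₀ hdeg₀ hval hmapseg hmapray
    hsumseg hsumray
end

section
/- Let K be a field with a valuation v: K → ℚ ∪ {∞} and a compatible multiplicative section t, with residue field κ. Let I be an ideal of K[x_1^{±1}, …, x_n^{±1}] and w ∈ ℚ^n. Then the initial ideal In_w I contains a monomial (an element c x^λ with c ∈ κ, c ≠ 0) if and only if there exists f ∈ I such that In_w f is a monomial. -/
/-!
Rescaling `x^λ ↦ t^{⟨λ, w⟩} x^λ` and reducing coefficients to `κ` gives a map `reduction` on the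
Laurent polynomials all of whose terms have weight `v(g_λ) + ⟨λ, w⟩ ≥ 0`; there it is additive and
compatible with multiplication by monomials. The initial form `In_w f` is the reduction of
`t^{-W} f`, where `W` is the minimal weight of `f`. Since every coefficient in `κ` lifts to the
valuation ring, the reductions of the weight-nonnegative elements of `I` form an ideal, which
therefore contains `In_w I`. So a monomial `c x^λ ∈ In_w I` is the reduction of a
weight-nonnegative `G ∈ I`; as this reduction is nonzero, the minimal weight of `G` is `0`, and then
`In_w G = reduction G = c x^λ`.
-/

open scoped Classical

/-- The finite value `v x ∈ ℚ` of the valuation (junk value `0` at `x = 0`). -/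
noncomputable def valQ {K : Type*} (v : K → WithTop ℚ) (x : K) : ℚ := (v x).untopD 0

/-- The weight `v(f_λ) + ⟨λ, w⟩` of the term of `f` with exponent `λ`. -/
noncomputable def termWeight {K : Type*} [Field K] {n : ℕ} (v : K → WithTop ℚ)
    (w : Fin n → ℚ) (f : AddMonoidAlgebra K (Fin n → ℤ)) (lam : Fin n → ℤ) : WithTop ℚ :=
  v (f.coeff lam) + ((∑ i, (lam i : ℚ) * w i : ℚ) : WithTop ℚ)

/-- The initial form `In_w f ∈ κ[x₁^{±1},…,x_n^{±1}]` of a Laurent polynomial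
`f ∈ K[x₁^{±1},…,x_n^{±1}]`: the sum over the exponents `λ` of `f` minimizing
`v(f_λ) + ⟨λ, w⟩` of `[t^{-v(f_λ)} f_λ] x^λ`, where `t` is the multiplicative section of
the valuation and `π` is reduction to the residue field `κ`. -/
noncomputable def inw {K κ : Type*} [Field K] [Field κ] {n : ℕ}
    (v : K → WithTop ℚ) (t : ℚ → K) (π : K → κ) (w : Fin n → ℚ)
    (f : AddMonoidAlgebra K (Fin n → ℤ)) : AddMonoidAlgebra κ (Fin n → ℤ) :=
  ∑ lam ∈ f.coeff.support.filter
      (fun lam => ∀ mu ∈ f.coeff.support, termWeight v w f lam ≤ termWeight v w f mu),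
    AddMonoidAlgebra.single lam (π (t (-(valQ v (f.coeff lam))) * f.coeff lam))

/-- The initial ideal `In_w I ⊆ κ[x₁^{±1},…,x_n^{±1}]` of an ideal
`I ⊆ K[x₁^{±1},…,x_n^{±1}]`, generated by the initial forms of elements of `I`. -/
noncomputable def inwIdeal {K κ : Type*} [Field K] [Field κ] {n : ℕ}
    (v : K → WithTop ℚ) (t : ℚ → K) (π : K → κ) (w : Fin n → ℚ)
    (I : Ideal (AddMonoidAlgebra K (Fin n → ℤ))) : Ideal (AddMonoidAlgebra κ (Fin n → ℤ)) :=
  Ideal.span {g | ∃ f ∈ I, g = inw v t π w f}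

namespace InitialForm

open AddMonoidAlgebra

variable {K κ : Type*} [Field K] {n : ℕ}

theorem coeff_sum_single {k G : Type*} [Semiring k] (s : Finset G) (φ : G → k) (b : G) :
    (∑ a ∈ s, single a (φ a)).coeff b = if b ∈ s then φ b else 0 := by
  rw [coeff_sum, Finsupp.finsetSum_apply]
  simp only [coeff_single, Finsupp.single_apply]
  exact Finset.sum_ite_eq' s b φ

def addValuationOfField (v : K → WithTop ℚ) (hv0 : ∀ x : K, v x = ⊤ ↔ x = 0)
    (hvmul : ∀ x y : K, v (x * y) = v x + v y)
    (hvadd : ∀ x y : K, min (v x) (v y) ≤ v (x + y)) : AddValuation K (WithTop ℚ) :=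
  AddValuation.of v ((hv0 0).2 rfl) (by
    obtain ⟨q, hq⟩ := WithTop.ne_top_iff_exists.1 (mt (hv0 1).1 one_ne_zero)
    have h := hvmul 1 1
    rw [mul_one, ← hq, ← WithTop.coe_add, WithTop.coe_inj] at h
    rw [← hq, show q = 0 by linarith]
    rfl) hvadd hvmul

def pairing (w : Fin n → ℚ) (lam : Fin n → ℤ) : ℚ := ∑ i, (lam i : ℚ) * w i

theorem pairing_add (w : Fin n → ℚ) (a b : Fin n → ℤ) :
    pairing w (a + b) = pairing w a + pairing w b := by
  simp only [pairing, Pi.add_apply, Int.cast_add, add_mul, Finset.sum_add_distrib]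

theorem termWeight_eq (v : K → WithTop ℚ) (w : Fin n → ℚ) (f : K[Fin n → ℤ]) (lam : Fin n → ℤ) :
    termWeight v w f lam = v (f.coeff lam) + pairing w lam := rfl

def WeightNonneg (v : K → WithTop ℚ) (w : Fin n → ℚ) (g : K[Fin n → ℤ]) : Prop :=
  ∀ lam, 0 ≤ termWeight v w g lam

noncomputable def reduction [Field κ] (t : ℚ → K) (π : K → κ) (w : Fin n → ℚ)
    (g : K[Fin n → ℤ]) : κ[Fin n → ℤ] :=
  ∑ lam ∈ g.coeff.support, single lam (π (t (pairing w lam) * g.coeff lam))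

def nonnegReductions [Field κ] (v : K → WithTop ℚ) (t : ℚ → K) (π : K → κ) (w : Fin n → ℚ)
    (I : Ideal K[Fin n → ℤ]) : Set κ[Fin n → ℤ] :=
  reduction t π w '' {G | G ∈ I ∧ WeightNonneg v w G}

section Valuation

variable (v : AddValuation K (WithTop ℚ)) {t : ℚ → K} {π : K → κ} {w : Fin n → ℚ}

theorem coe_valQ {x : K} (hx : x ≠ 0) : (valQ v x : WithTop ℚ) = v x := by
  obtain ⟨q, hq⟩ := WithTop.ne_top_iff_exists.mp (v.ne_top_iff.mpr hx)
  rw [valQ, ← hq, WithTop.untopD_coe]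

theorem val_section_mul (ht_val : ∀ a : ℚ, v (t a) = a) (a : ℚ) (x : K) :
    v (t a * x) = a + v x := by
  rw [v.map_mul, ht_val]

theorem section_zero (ht_hom : ∀ a b : ℚ, t (a + b) = t a * t b)
    (ht_val : ∀ a : ℚ, v (t a) = a) : t 0 = 1 := by
  have h0 : t 0 ≠ 0 := by rw [← v.ne_top_iff, ht_val]; exact WithTop.coe_ne_top
  have h := ht_hom 0 0
  rw [add_zero] at h
  exact mul_left_cancel₀ h0 (by rw [← h, mul_one])

theorem exists_monomial_lift (ht_hom : ∀ a b : ℚ, t (a + b) = t a * t b)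
    (ht_val : ∀ a : ℚ, v (t a) = a) (hπ_surj : ∀ c : κ, ∃ x : K, 0 ≤ v x ∧ π x = c)
    (μ : Fin n → ℤ) (d : κ) : ∃ b : K, 0 ≤ v b + pairing w μ ∧ π (t (pairing w μ) * b) = d := by
  obtain ⟨D, hD, rfl⟩ := hπ_surj d
  refine ⟨t (-pairing w μ) * D, ?_, ?_⟩
  · rwa [val_section_mul v ht_val, add_right_comm, ← WithTop.coe_add, neg_add_cancel,
      WithTop.coe_zero, zero_add]
  · rw [← mul_assoc, ← ht_hom, add_neg_cancel, section_zero v ht_hom ht_val, one_mul]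

theorem termWeight_single_mul (μ lam : Fin n → ℤ) (b : K) (f : K[Fin n → ℤ]) :
    termWeight v w (single μ b * f) lam = v b + pairing w μ + termWeight v w f (-μ + lam) := by
  have h : pairing w lam = pairing w μ + pairing w (-μ + lam) := by
    rw [← pairing_add, add_neg_cancel_left]
  rw [termWeight_eq, termWeight_eq, coeff_single_mul_apply, v.map_mul, h, WithTop.coe_add]
  ac_rfl

theorem termWeight_smul (ht_val : ∀ a : ℚ, v (t a) = a) (a : ℚ) (f : K[Fin n → ℤ])
    (lam : Fin n → ℤ) : termWeight v w (t a • f) lam = a + termWeight v w f lam := by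
  rw [termWeight_eq, termWeight_eq, coeff_smul_apply, smul_eq_mul, val_section_mul v ht_val,
    add_assoc]

theorem weightNonneg_zero : WeightNonneg v w 0 := fun lam => by
  rw [termWeight_eq, coeff_zero, Finsupp.zero_apply, v.map_zero, top_add]
  exact le_top

theorem WeightNonneg.add {f g : K[Fin n → ℤ]} (hf : WeightNonneg v w f)
    (hg : WeightNonneg v w g) : WeightNonneg v w (f + g) := fun lam => by
  rw [termWeight_eq, coeff_add, Finsupp.add_apply]
  calc (0 : WithTop ℚ) ≤ min (v (f.coeff lam)) (v (g.coeff lam)) + pairing w lam := by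
        rw [← min_add_add_right]; exact le_min (hf lam) (hg lam)
    _ ≤ _ := by gcongr; exact v.map_add _ _

theorem WeightNonneg.single_mul {μ : Fin n → ℤ} {b : K} (hb : 0 ≤ v b + pairing w μ)
    {f : K[Fin n → ℤ]} (hf : WeightNonneg v w f) : WeightNonneg v w (single μ b * f) :=
  fun lam => by rw [termWeight_single_mul]; exact add_nonneg hb (hf _)

theorem WeightNonneg.rescaled_coeff_nonneg (ht_val : ∀ a : ℚ, v (t a) = a)
    {f : K[Fin n → ℤ]} (hf : WeightNonneg v w f) (lam : Fin n → ℤ) :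
    0 ≤ v (t (pairing w lam) * f.coeff lam) := by
  rw [val_section_mul v ht_val, add_comm]
  exact hf lam

theorem termWeight_eq_top {f : K[Fin n → ℤ]} {lam : Fin n → ℤ} (h : lam ∉ f.coeff.support) :
    termWeight v w f lam = ⊤ := by
  rw [termWeight_eq, Finsupp.notMem_support_iff.1 h, v.map_zero, top_add]

theorem weightNonneg_smul_of_le (ht_val : ∀ a : ℚ, v (t a) = a) {f : K[Fin n → ℤ]} {W : ℚ}
    (hW : ∀ lam ∈ f.coeff.support, (W : WithTop ℚ) ≤ termWeight v w f lam) :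
    WeightNonneg v w (t (-W) • f) := fun lam => by
  have hle : (W : WithTop ℚ) ≤ termWeight v w f lam := by
    by_cases hlam : lam ∈ f.coeff.support
    · exact hW lam hlam
    · rw [termWeight_eq_top v hlam]; exact le_top
  rw [termWeight_smul v ht_val]
  generalize termWeight v w f lam = x at hle
  induction x using WithTop.recTopCoe with
  | top => simp
  | coe q => exact_mod_cast (by linarith [WithTop.coe_le_coe.1 hle] : (0 : ℚ) ≤ -W + q)

variable [Field κ]

theorem coeff_reduction (hπ0 : π 0 = 0) (g : K[Fin n → ℤ]) (lam : Fin n → ℤ) :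
    (reduction t π w g).coeff lam = π (t (pairing w lam) * g.coeff lam) := by
  rw [reduction, coeff_sum_single]
  split_ifs with h
  · rfl
  · rw [Finsupp.notMem_support_iff.mp h, mul_zero, hπ0]

theorem reduction_zero : reduction t π w (0 : K[Fin n → ℤ]) = 0 := by
  simp [reduction]

theorem reduction_add (ht_val : ∀ a : ℚ, v (t a) = a) (hπ0 : π 0 = 0)
    (hπ_add : ∀ x y : K, 0 ≤ v x → 0 ≤ v y → π (x + y) = π x + π y)
    {f g : K[Fin n → ℤ]} (hf : WeightNonneg v w f) (hg : WeightNonneg v w g) :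
    reduction t π w (f + g) = reduction t π w f + reduction t π w g := by
  ext lam
  simp only [coeff_add, Finsupp.add_apply, coeff_reduction hπ0, mul_add]
  exact hπ_add _ _ (hf.rescaled_coeff_nonneg v ht_val lam)
    (hg.rescaled_coeff_nonneg v ht_val lam)

theorem reduction_single_mul (ht_hom : ∀ a b : ℚ, t (a + b) = t a * t b)
    (ht_val : ∀ a : ℚ, v (t a) = a) (hπ0 : π 0 = 0)
    (hπ_mul : ∀ x y : K, 0 ≤ v x → 0 ≤ v y → π (x * y) = π x * π y)
    {μ : Fin n → ℤ} {b : K} (hb : 0 ≤ v b + pairing w μ)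
    {f : K[Fin n → ℤ]} (hf : WeightNonneg v w f) :
    reduction t π w (single μ b * f) = single μ (π (t (pairing w μ) * b)) * reduction t π w f := by
  ext lam
  have hb' : 0 ≤ v (t (pairing w μ) * b) := by rwa [val_section_mul v ht_val, add_comm]
  rw [coeff_reduction hπ0, coeff_single_mul_apply, coeff_single_mul_apply, coeff_reduction hπ0,
    ← hπ_mul _ _ hb' (hf.rescaled_coeff_nonneg v ht_val _)]
  congr 1
  rw [← add_neg_cancel_left μ lam, pairing_add, ht_hom, neg_add_cancel_left]
  ring

theorem inw_eq_reduction_smul_of_isLeast (ht_hom : ∀ a b : ℚ, t (a + b) = t a * t b)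
    (ht_val : ∀ a : ℚ, v (t a) = a) (hπ0 : π 0 = 0) (hπ_zero : ∀ x : K, 0 < v x → π x = 0)
    {f : K[Fin n → ℤ]} {W : ℚ} (hW : IsLeast (termWeight v w f '' f.coeff.support) W) :
    inw v t π w f = reduction t π w (t (-W) • f) := by
  have hmin : ∀ μ ∈ f.coeff.support, (∀ ν ∈ f.coeff.support,
      termWeight v w f μ ≤ termWeight v w f ν) ↔ termWeight v w f μ = W := by
    intro μ hμ
    constructor
    · intro h
      obtain ⟨ν, hν, hνW⟩ := hW.1
      exact le_antisymm (hνW ▸ h ν hν) (hW.2 ⟨μ, hμ, rfl⟩)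
    · intro h ν hν
      exact h ▸ hW.2 ⟨ν, hν, rfl⟩
  ext μ
  rw [inw, coeff_sum_single, coeff_reduction hπ0, coeff_smul_apply, smul_eq_mul, ← mul_assoc,
    ← ht_hom]
  by_cases hμ : μ ∈ f.coeff.support
  swap
  · rw [if_neg fun h => hμ (Finset.mem_filter.1 h).1, Finsupp.notMem_support_iff.1 hμ, mul_zero,
      hπ0]
  have hq := coe_valQ v (Finsupp.mem_support_iff.1 hμ)
  have htw : termWeight v w f μ = ((valQ v (f.coeff μ) + pairing w μ : ℚ) : WithTop ℚ) := by
    rw [termWeight_eq, ← hq, WithTop.coe_add]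
  have hWμ : W ≤ valQ v (f.coeff μ) + pairing w μ := by exact_mod_cast htw ▸ hW.2 ⟨μ, hμ, rfl⟩
  simp only [Finset.mem_filter, hμ, true_and, hmin μ hμ]
  simp only [htw, WithTop.coe_inj]
  split_ifs with h
  · congr 3
    linarith
  · refine (hπ_zero _ ?_).symm
    rw [val_section_mul v ht_val, ← hq]
    exact_mod_cast (by linarith [lt_of_le_of_ne hWμ (Ne.symm h)])

theorem exists_inw_eq_reduction_smul (ht_hom : ∀ a b : ℚ, t (a + b) = t a * t b)
    (ht_val : ∀ a : ℚ, v (t a) = a) (hπ0 : π 0 = 0) (hπ_zero : ∀ x : K, 0 < v x → π x = 0)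
    (f : K[Fin n → ℤ]) :
    ∃ W : ℚ, WeightNonneg v w (t (-W) • f) ∧ inw v t π w f = reduction t π w (t (-W) • f) := by
  rcases eq_or_ne f 0 with rfl | hf
  · exact ⟨0, by rw [smul_zero]; exact weightNonneg_zero v, by simp [inw, reduction_zero]⟩
  obtain ⟨μ, hμ, hmin⟩ := f.coeff.support.exists_min_image (termWeight v w f)
    (Finsupp.support_nonempty_iff.2 (coeff_injective.ne hf))
  have htw : termWeight v w f μ = ((valQ v (f.coeff μ) + pairing w μ : ℚ) : WithTop ℚ) := by
    rw [termWeight_eq, ← coe_valQ v (Finsupp.mem_support_iff.1 hμ), WithTop.coe_add]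
  refine ⟨_, weightNonneg_smul_of_le v ht_val fun lam hlam => htw ▸ hmin lam hlam,
    inw_eq_reduction_smul_of_isLeast v ht_hom ht_val hπ0 hπ_zero ⟨⟨μ, hμ, htw⟩, ?_⟩⟩
  rintro _ ⟨lam, hlam, rfl⟩
  exact htw ▸ hmin lam hlam

theorem inw_eq_reduction_of_reduction_ne_zero (ht_hom : ∀ a b : ℚ, t (a + b) = t a * t b)
    (ht_val : ∀ a : ℚ, v (t a) = a) (hπ0 : π 0 = 0) (hπ_zero : ∀ x : K, 0 < v x → π x = 0)
    {G : K[Fin n → ℤ]} (hG : WeightNonneg v w G) (h : reduction t π w G ≠ 0) :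
    inw v t π w G = reduction t π w G := by
  obtain ⟨μ, hμ⟩ := Finsupp.ne_iff.1 (coeff_injective.ne h)
  rw [coeff_reduction hπ0, coeff_zero, Finsupp.zero_apply] at hμ
  have hGμ : G.coeff μ ≠ 0 := fun h0 => hμ (by rw [h0, mul_zero, hπ0])
  -- `π` kills the coefficients of positive valuation, so the weight of `G` at `μ` is `0`
  have htw : termWeight v w G μ = ((0 : ℚ) : WithTop ℚ) := by
    refine le_antisymm ?_ (hG μ)
    rw [termWeight_eq, add_comm, ← val_section_mul v ht_val, WithTop.coe_zero]
    exact not_lt.1 (mt (hπ_zero _) hμ)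
  have hleast : IsLeast (termWeight v w G '' G.coeff.support) ((0 : ℚ) : WithTop ℚ) :=
    ⟨⟨μ, Finsupp.mem_support_iff.2 hGμ, htw⟩, by rintro _ ⟨lam, -, rfl⟩; exact hG lam⟩
  rw [inw_eq_reduction_smul_of_isLeast v ht_hom ht_val hπ0 hπ_zero hleast, neg_zero,
    section_zero v ht_hom ht_val, one_smul]

variable {I : Ideal K[Fin n → ℤ]}

theorem zero_mem_nonnegReductions : 0 ∈ nonnegReductions v t π w I :=
  ⟨0, ⟨I.zero_mem, weightNonneg_zero v⟩, reduction_zero⟩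

theorem add_mem_nonnegReductions (ht_val : ∀ a : ℚ, v (t a) = a) (hπ0 : π 0 = 0)
    (hπ_add : ∀ x y : K, 0 ≤ v x → 0 ≤ v y → π (x + y) = π x + π y)
    {h₁ h₂ : κ[Fin n → ℤ]} (h₁_mem : h₁ ∈ nonnegReductions v t π w I)
    (h₂_mem : h₂ ∈ nonnegReductions v t π w I) : h₁ + h₂ ∈ nonnegReductions v t π w I := by
  obtain ⟨G₁, ⟨hG₁I, hG₁⟩, rfl⟩ := h₁_mem
  obtain ⟨G₂, ⟨hG₂I, hG₂⟩, rfl⟩ := h₂_mem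
  exact ⟨G₁ + G₂, ⟨I.add_mem hG₁I hG₂I, hG₁.add v hG₂⟩, reduction_add v ht_val hπ0 hπ_add hG₁ hG₂⟩

theorem mul_mem_nonnegReductions (ht_hom : ∀ a b : ℚ, t (a + b) = t a * t b)
    (ht_val : ∀ a : ℚ, v (t a) = a) (hπ0 : π 0 = 0)
    (hπ_add : ∀ x y : K, 0 ≤ v x → 0 ≤ v y → π (x + y) = π x + π y)
    (hπ_mul : ∀ x y : K, 0 ≤ v x → 0 ≤ v y → π (x * y) = π x * π y)
    (hπ_surj : ∀ c : κ, ∃ x : K, 0 ≤ v x ∧ π x = c)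
    (p : κ[Fin n → ℤ]) {h : κ[Fin n → ℤ]} (hh : h ∈ nonnegReductions v t π w I) :
    p * h ∈ nonnegReductions v t π w I := by
  induction p using AddMonoidAlgebra.induction_linear with
  | zero => rw [zero_mul]; exact zero_mem_nonnegReductions v
  | add p q hp hq => rw [add_mul]; exact add_mem_nonnegReductions v ht_val hπ0 hπ_add hp hq
  | single μ d =>
    obtain ⟨G, ⟨hGI, hG⟩, rfl⟩ := hh
    obtain ⟨b, hb, rfl⟩ := exists_monomial_lift v ht_hom ht_val hπ_surj (w := w) μ d
    exact ⟨single μ b * G, ⟨I.mul_mem_left _ hGI, hG.single_mul v hb⟩,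
      reduction_single_mul v ht_hom ht_val hπ0 hπ_mul hb hG⟩

theorem inwIdeal_subset_nonnegReductions (ht_hom : ∀ a b : ℚ, t (a + b) = t a * t b)
    (ht_val : ∀ a : ℚ, v (t a) = a) (hπ0 : π 0 = 0)
    (hπ_add : ∀ x y : K, 0 ≤ v x → 0 ≤ v y → π (x + y) = π x + π y)
    (hπ_mul : ∀ x y : K, 0 ≤ v x → 0 ≤ v y → π (x * y) = π x * π y)
    (hπ_zero : ∀ x : K, 0 < v x → π x = 0) (hπ_surj : ∀ c : κ, ∃ x : K, 0 ≤ v x ∧ π x = c) :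
    (inwIdeal v t π w I : Set κ[Fin n → ℤ]) ⊆ nonnegReductions v t π w I := by
  intro h hh
  induction hh using Submodule.span_induction with
  | mem _ hg =>
    obtain ⟨f, hfI, rfl⟩ := hg
    obtain ⟨W, hW, hinw⟩ := exists_inw_eq_reduction_smul v ht_hom ht_val hπ0 hπ_zero (w := w) f
    exact ⟨t (-W) • f, ⟨Submodule.smul_of_tower_mem I _ hfI, hW⟩, hinw.symm⟩
  | zero => exact zero_mem_nonnegReductions v
  | add _ _ _ _ h₁ h₂ => exact add_mem_nonnegReductions v ht_val hπ0 hπ_add h₁ h₂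
  | smul p _ _ hh => exact mul_mem_nonnegReductions v ht_hom ht_val hπ0 hπ_add hπ_mul hπ_surj p hh

end Valuation

end InitialForm

open InitialForm

theorem initial_ideal_monomial_iff_initial_form_monomial_general
    {K κ : Type*} [Field K] [Field κ] {n : ℕ}
    (v : K → WithTop ℚ)
    (hv0 : ∀ x : K, v x = ⊤ ↔ x = 0)
    (hvmul : ∀ x y : K, v (x * y) = v x + v y)
    (hvadd : ∀ x y : K, min (v x) (v y) ≤ v (x + y))
    (t : ℚ → K)
    (ht_hom : ∀ a b : ℚ, t (a + b) = t a * t b)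
    (ht_val : ∀ a : ℚ, v (t a) = (a : WithTop ℚ))
    (π : K → κ)
    (hπ_add : ∀ x y : K, 0 ≤ v x → 0 ≤ v y → π (x + y) = π x + π y)
    (hπ_mul : ∀ x y : K, 0 ≤ v x → 0 ≤ v y → π (x * y) = π x * π y)
    (hπ_zero : ∀ x : K, 0 < v x → π x = 0)
    (hπ_surj : ∀ c : κ, ∃ x : K, 0 ≤ v x ∧ π x = c)
    (I : Ideal (AddMonoidAlgebra K (Fin n → ℤ))) (w : Fin n → ℚ) :
    (∃ (lam : Fin n → ℤ) (c : κ), c ≠ 0 ∧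
        AddMonoidAlgebra.single lam c ∈ inwIdeal v t π w I) ↔
      (∃ f ∈ I, ∃ (lam : Fin n → ℤ) (c : κ), c ≠ 0 ∧
        inw v t π w f = AddMonoidAlgebra.single lam c) := by
  let V := addValuationOfField v hv0 hvmul hvadd
  have hπ0 : π 0 = 0 := hπ_zero 0 (by rw [(hv0 0).2 rfl]; exact WithTop.coe_lt_top 0)
  constructor
  · rintro ⟨lam, c, hc, hmem⟩
    obtain ⟨G, ⟨hGI, hG⟩, hred⟩ := inwIdeal_subset_nonnegReductions V ht_hom ht_val hπ0 hπ_add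
      hπ_mul hπ_zero hπ_surj hmem
    refine ⟨G, hGI, lam, c, hc, ?_⟩
    rw [← hred]
    exact inw_eq_reduction_of_reduction_ne_zero V ht_hom ht_val hπ0 hπ_zero hG
      (hred ▸ AddMonoidAlgebra.single_ne_zero.2 hc)
  · rintro ⟨f, hfI, lam, c, hc, hf⟩
    exact ⟨lam, c, hc, hf ▸ Ideal.subset_span ⟨f, hfI, rfl⟩⟩

/-- Let `K` be a field with valuation `v : K → ℚ ∪ {∞}`, a compatible
multiplicative section `t`, and residue field `κ` with reduction `π`.  Let `I` be an ideal
of `K[x₁^{±1},…,x_n^{±1}]` and `w ∈ ℚ^n`.  Then `In_w I` contains a monomial if and only if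
there exists `f ∈ I` such that `In_w f` is a monomial. -/
theorem initial_ideal_monomial_iff_initial_form_monomial
    {K κ : Type*} [Field K] [Field κ] {n : ℕ}
    (v : K → WithTop ℚ)
    (hv0 : ∀ x : K, v x = ⊤ ↔ x = 0)
    (hvmul : ∀ x y : K, v (x * y) = v x + v y)
    (hvadd : ∀ x y : K, min (v x) (v y) ≤ v (x + y))
    (t : ℚ → K)
    (ht_hom : ∀ a b : ℚ, t (a + b) = t a * t b)
    (ht_val : ∀ a : ℚ, v (t a) = (a : WithTop ℚ))
    (π : K → κ)
    (hπ_add : ∀ x y : K, 0 ≤ v x → 0 ≤ v y → π (x + y) = π x + π y)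
    (hπ_mul : ∀ x y : K, 0 ≤ v x → 0 ≤ v y → π (x * y) = π x * π y)
    (hπ_one : π 1 = 1)
    (hπ_zero : ∀ x : K, 0 < v x → π x = 0)
    (hπ_unit : ∀ x : K, v x = 0 → π x ≠ 0)
    (hπ_surj : ∀ c : κ, ∃ x : K, 0 ≤ v x ∧ π x = c)
    (I : Ideal (AddMonoidAlgebra K (Fin n → ℤ))) (w : Fin n → ℚ) :
    (∃ (lam : Fin n → ℤ) (c : κ), c ≠ 0 ∧
        AddMonoidAlgebra.single lam c ∈ inwIdeal v t π w I) ↔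
      (∃ f ∈ I, ∃ (lam : Fin n → ℤ) (c : κ), c ≠ 0 ∧
        inw v t π w f = AddMonoidAlgebra.single lam c) :=
  initial_ideal_monomial_iff_initial_form_monomial_general v hv0 hvmul hvadd t ht_hom ht_val π
    hπ_add hπ_mul hπ_zero hπ_surj I w
end

section
/- Let κ be a field, let J be an ideal of the Laurent polynomial ring κ[x_1^{±1}, …, x_n^{±1}], and let u ∈ ℤ^n. If In_u J = J, then J is invariant under the one-parameter torus action in direction u: for every s ∈ κ^*, the κ-algebra automorphism of κ[x_1^{±1}, …, x_n^{±1}] determined by x^λ ↦ s^{⟨u, λ⟩} x^λ maps J onto J. -/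
open scoped Classical

/-- The pairing `⟨u, λ⟩ = Σᵢ uᵢ λᵢ` on `ℤ^n`. -/
def intDot {n : ℕ} (u lam : Fin n → ℤ) : ℤ := ∑ i, u i * lam i

/-- The initial form `In_u f` of a Laurent polynomial
`f ∈ κ[x₁^{±1}, …, x_n^{±1}]` (encoded as `AddMonoidAlgebra κ (Fin n → ℤ)`) with respect to
`u ∈ ℤ^n` and the trivial valuation: the sum of the terms of `f` whose exponents minimize
`⟨λ, u⟩`. -/
noncomputable def initialForm {κ : Type*} [Field κ] {n : ℕ} (u : Fin n → ℤ)
    (f : AddMonoidAlgebra κ (Fin n → ℤ)) : AddMonoidAlgebra κ (Fin n → ℤ) :=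
  ∑ lam ∈ f.coeff.support.filter (fun lam => ∀ mu ∈ f.coeff.support, intDot u lam ≤ intDot u mu),
    AddMonoidAlgebra.single lam (f.coeff lam)

/-- The initial ideal `In_u J`, generated by all `In_u f` with `f ∈ J`. -/
noncomputable def initialIdeal {κ : Type*} [Field κ] {n : ℕ} (u : Fin n → ℤ)
    (J : Ideal (AddMonoidAlgebra κ (Fin n → ℤ))) : Ideal (AddMonoidAlgebra κ (Fin n → ℤ)) :=
  Ideal.span {g | ∃ f ∈ J, g = initialForm u f}

/-- The action of `s ∈ κ^*` on Laurent polynomials through the one-parameter subgroup in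
direction `u`: the map determined by `x^λ ↦ s^{⟨u,λ⟩} x^λ`. -/
noncomputable def torusScale {κ : Type*} [Field κ] {n : ℕ} (u : Fin n → ℤ) (s : κˣ)
    (f : AddMonoidAlgebra κ (Fin n → ℤ)) : AddMonoidAlgebra κ (Fin n → ℤ) :=
  f.coeff.sum fun lam c => AddMonoidAlgebra.single lam (((s : κ) ^ (intDot u lam)) * c)

/-!
The torus action multiplies every `x^λ` with `⟨u, λ⟩ = d` by `s^d`, so it acts on
the initial form `In_u f` as multiplication by a scalar. Since `In_u f ∈ In_u J ⊆ J`, both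
`In_u f` and its image lie in `J`, and `f - In_u f ∈ J` has fewer terms than `f`; induction on the
number of terms gives `s · J ⊆ J` for every `s`, and `s⁻¹ · J ⊆ J` gives equality.
-/

section TorusScale

variable {κ : Type*} [Field κ] {n : ℕ} (u : Fin n → ℤ)

local notation "κ[ℤⁿ]" => AddMonoidAlgebra κ (Fin n → ℤ)

lemma torusScale_coeff (s : κˣ) (f : κ[ℤⁿ]) (mu : Fin n → ℤ) :
    (torusScale u s f).coeff mu = (s : κ) ^ intDot u mu * f.coeff mu := by
  unfold torusScale
  rw [AddMonoidAlgebra.coeff_finsuppSum, Finsupp.sum_apply]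
  simp only [AddMonoidAlgebra.coeff_single, Finsupp.single_apply]
  rw [Finsupp.sum_ite_eq' f.coeff mu (fun lam c => (s : κ) ^ intDot u lam * c)]
  split_ifs with hmu
  · rfl
  · rw [Finsupp.notMem_support_iff.mp hmu, mul_zero]

lemma torusScale_zero (s : κˣ) : torusScale u s (0 : κ[ℤⁿ]) = 0 := by
  simp [torusScale]

lemma torusScale_sub (s : κˣ) (f g : κ[ℤⁿ]) :
    torusScale u s (f - g) = torusScale u s f - torusScale u s g := by
  ext mu
  simp only [torusScale_coeff, AddMonoidAlgebra.coeff_sub, Finsupp.sub_apply, mul_sub]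

lemma torusScale_torusScale (s t : κˣ) (f : κ[ℤⁿ]) :
    torusScale u s (torusScale u t f) = torusScale u (s * t) f := by
  ext mu
  simp only [torusScale_coeff, Units.val_mul, mul_zpow, mul_assoc]

lemma torusScale_one (f : κ[ℤⁿ]) : torusScale u 1 f = f := by
  ext mu
  simp only [torusScale_coeff, Units.val_one, one_zpow, one_mul]

lemma torusScale_eq_single_zero_mul_of_homogeneous (s : κˣ) {g : κ[ℤⁿ]} {d : ℤ}
    (hg : ∀ mu ∈ g.coeff.support, intDot u mu = d) :
    torusScale u s g = AddMonoidAlgebra.single 0 ((s : κ) ^ d) * g := by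
  ext mu
  rw [torusScale_coeff, AddMonoidAlgebra.coeff_single_zero_mul]
  by_cases hmu : mu ∈ g.coeff.support
  · rw [hg mu hmu]
  · rw [Finsupp.notMem_support_iff.mp hmu, mul_zero, mul_zero]

lemma initialForm_coeff (f : κ[ℤⁿ]) (mu : Fin n → ℤ) :
    (initialForm u f).coeff mu =
      if ∀ nu ∈ f.coeff.support, intDot u mu ≤ intDot u nu then f.coeff mu else 0 := by
  unfold initialForm
  rw [AddMonoidAlgebra.coeff_sum, Finset.sum_apply']
  simp only [AddMonoidAlgebra.coeff_single, Finsupp.single_apply]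
  rw [Finset.sum_ite_eq' _ mu (fun lam => f.coeff lam)]
  by_cases hmu : f.coeff mu = 0 <;> simp [hmu]

lemma intDot_eq_of_mem_support_initialForm {f : κ[ℤⁿ]} {mu nu : Fin n → ℤ}
    (hmu : mu ∈ (initialForm u f).coeff.support) (hnu : nu ∈ (initialForm u f).coeff.support) :
    intDot u mu = intDot u nu := by
  have minimizes_of_mem {lam} (hlam : lam ∈ (initialForm u f).coeff.support) :
      lam ∈ f.coeff.support ∧ ∀ nu ∈ f.coeff.support, intDot u lam ≤ intDot u nu := by
    rw [Finsupp.mem_support_iff, initialForm_coeff] at hlam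
    split_ifs at hlam with hlam_min
    · exact ⟨Finsupp.mem_support_iff.mpr hlam, hlam_min⟩
    · exact absurd rfl hlam
  obtain ⟨hmu_supp, hmu_min⟩ := minimizes_of_mem hmu
  obtain ⟨hnu_supp, hnu_min⟩ := minimizes_of_mem hnu
  exact le_antisymm (hmu_min nu hnu_supp) (hnu_min mu hmu_supp)

lemma support_sub_initialForm_ssubset {f : κ[ℤⁿ]} (hf : f ≠ 0) :
    (f - initialForm u f).coeff.support ⊂ f.coeff.support := by
  have hsupp : f.coeff.support.Nonempty :=
    Finsupp.support_nonempty_iff.mpr (by rwa [Ne, AddMonoidAlgebra.coeff_eq_zero])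
  obtain ⟨lam, hlam, hmin⟩ := Finset.exists_min_image f.coeff.support (intDot u) hsupp
  have hcoeff : ∀ mu, (f - initialForm u f).coeff mu =
      if ∀ nu ∈ f.coeff.support, intDot u mu ≤ intDot u nu then 0 else f.coeff mu := by
    intro mu
    rw [AddMonoidAlgebra.coeff_sub, Finsupp.sub_apply, initialForm_coeff]
    split_ifs <;> simp
  refine Finset.ssubset_iff_of_subset (fun mu hmu => ?_) |>.mpr ⟨lam, hlam, ?_⟩
  · rw [Finsupp.mem_support_iff, hcoeff] at hmu
    rw [Finsupp.mem_support_iff]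
    split_ifs at hmu
    · exact absurd rfl hmu
    · exact hmu
  · rw [Finsupp.mem_support_iff, hcoeff, if_pos hmin, not_not]

variable {u}

lemma initialForm_mem {J : Ideal κ[ℤⁿ]} (hJ : initialIdeal u J ≤ J) {f : κ[ℤⁿ]} (hf : f ∈ J) :
    initialForm u f ∈ J :=
  hJ (Ideal.subset_span ⟨f, hf, rfl⟩)

lemma torusScale_initialForm_mem {J : Ideal κ[ℤⁿ]} (hJ : initialIdeal u J ≤ J) (s : κˣ)
    {f : κ[ℤⁿ]} (hf : f ∈ J) : torusScale u s (initialForm u f) ∈ J := by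
  rcases (initialForm u f).coeff.support.eq_empty_or_nonempty with hempty | ⟨mu₀, hmu₀⟩
  · rw [Finsupp.support_eq_empty, AddMonoidAlgebra.coeff_eq_zero] at hempty
    rw [hempty, torusScale_zero]
    exact J.zero_mem
  · rw [torusScale_eq_single_zero_mul_of_homogeneous u s
      fun mu hmu => intDot_eq_of_mem_support_initialForm u hmu hmu₀]
    exact J.mul_mem_left _ (initialForm_mem hJ hf)

theorem torusScale_mem_of_initialIdeal_le {J : Ideal κ[ℤⁿ]} (hJ : initialIdeal u J ≤ J)
    (s : κˣ) {f : κ[ℤⁿ]} (hf : f ∈ J) : torusScale u s f ∈ J := by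
  by_cases hf0 : f = 0
  · rw [hf0, torusScale_zero]
    exact J.zero_mem
  have hrest : torusScale u s (f - initialForm u f) ∈ J :=
    torusScale_mem_of_initialIdeal_le hJ s (J.sub_mem hf (initialForm_mem hJ hf))
  rw [torusScale_sub] at hrest
  simpa only [sub_add_cancel] using J.add_mem hrest (torusScale_initialForm_mem hJ s hf)
termination_by f.coeff.support.card
decreasing_by exact Finset.card_lt_card (support_sub_initialForm_ssubset u hf0)

end TorusScale

/-- Let `κ` be a field, `J` an ideal of `κ[x₁^{±1}, …, x_n^{±1}]` and
`u ∈ ℤ^n`.  If `In_u J = J` then `J` is invariant under the one-parameter torus action in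
direction `u`: for every `s ∈ κ^*`, the map determined by `x^λ ↦ s^{⟨u,λ⟩} x^λ` maps `J`
onto `J`. -/
theorem initial_fixed_implies_torus_invariant
    {κ : Type*} [Field κ] {n : ℕ} (u : Fin n → ℤ)
    (J : Ideal (AddMonoidAlgebra κ (Fin n → ℤ)))
    (h : initialIdeal u J = J) :
    ∀ s : κˣ, torusScale u s '' (J : Set (AddMonoidAlgebra κ (Fin n → ℤ)))
      = (J : Set (AddMonoidAlgebra κ (Fin n → ℤ))) := by
  intro s
  refine Set.Subset.antisymm ?_ fun g hg => ⟨torusScale u s⁻¹ g, ?_, ?_⟩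
  · rintro _ ⟨f, hf, rfl⟩
    exact torusScale_mem_of_initialIdeal_le h.le s hf
  · exact torusScale_mem_of_initialIdeal_le h.le s⁻¹ hg
  · rw [torusScale_torusScale, mul_inv_cancel, torusScale_one]
end

section
/- Let κ be a field and let I be an ideal of the Laurent polynomial ring κ[x_1^{±1}, …, x_n^{±1}]. For a Laurent polynomial g, let In_{e_n} g be the sum of the terms of g whose exponent of x_n is minimal. Then for every f ∈ κ[x_1^{±1}, …, x_{n-1}^{±1}] (a Laurent polynomial not involving x_n), f belongs to the ideal of κ[x_1^{±1}, …, x_n^{±1}] generated by {In_{e_n} g : g ∈ I} if and only if there exist d ≥ 0 and f_1, …, f_d ∈ κ[x_1^{±1}, …, x_{n-1}^{±1}] such that f + x_n f_1 + ⋯ + x_n^d f_d ∈ I. -/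
open scoped Classical

/-- The initial form `In_{e_n} g` of a Laurent polynomial
`g ∈ κ[x₁^{±1}, …, x_{n+1}^{±1}]` (encoded as `AddMonoidAlgebra κ (Fin (n+1) → ℤ)`):
the sum of the terms of `g` whose exponent of the last variable is minimal. -/
noncomputable def initialFormLast {κ : Type*} [Field κ] {n : ℕ}
    (g : AddMonoidAlgebra κ (Fin (n + 1) → ℤ)) : AddMonoidAlgebra κ (Fin (n + 1) → ℤ) :=
  ∑ lam ∈ g.coeff.support.filter
      (fun lam => ∀ mu ∈ g.coeff.support, lam (Fin.last n) ≤ mu (Fin.last n)),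
    AddMonoidAlgebra.single lam (g.coeff lam)

/-!
Grade the Laurent polynomial ring by the exponent of the last variable; the initial form of `h`
is then its lowest nonzero homogeneous component. Every `g` in the ideal generated by initial
forms has, in each degree `m`, a witness `H ∈ I` with no components below degree `m` and the same
degree-`m` component as `g`: an initial form of degree `μ` is witnessed by its source in degree `μ`
and by `0` elsewhere, and multiplying a witness by a homogeneous element of degree `p` gives one
in degree `m + p`. For `f` of degree `0`, the elements of `I` without negative components and
with degree-`0` component `f` are exactly the `f + x_n f₁ + ⋯ + x_n^d f_d`, since each positive
component is `x_n^k` times a degree-`0` element; conversely the initial form of such an element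
is `f`.
-/
open DirectSum GradedRing

namespace AddMonoidAlgebra

theorem single_mul_single_neg_mul {R G : Type*} [Semiring R] [AddGroup G] (g : G) (a : R[G]) :
    single g (1 : R) * (single (-g) 1 * a) = a := by
  rw [← mul_assoc, single_mul_single, add_neg_cancel, mul_one, ← one_def, one_mul]

variable {R M ι : Type*} [CommSemiring R] [AddMonoid M] [DecidableEq ι] [AddMonoid ι]
  (φ : M →+ ι)

theorem proj_gradeBy (i : ι) (g : R[M]) :
    proj (gradeBy R φ) i g = ofCoeff (g.coeff.filter (φ · = i)) := by
  induction g using induction_linear with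
  | zero => simp [Finsupp.filter_zero]
  | add g₁ g₂ h₁ h₂ => rw [map_add, h₁, h₂, coeff_add, Finsupp.filter_add, ofCoeff_add]
  | single m r =>
    by_cases hm : φ m = i
    · rw [coeff_single, Finsupp.filter_single_of_pos (fun x => φ x = i) hm, ofCoeff_single,
        proj_apply, decompose_of_mem_same _ (hm ▸ single_mem_gradeBy φ m r)]
    · rw [coeff_single, Finsupp.filter_single_of_neg (fun x => φ x = i) hm, ofCoeff_zero,
        proj_apply, decompose_of_mem_ne _ (single_mem_gradeBy φ m r) hm]

theorem proj_gradeBy_eq_zero_iff {i : ι} {g : R[M]} :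
    proj (gradeBy R φ) i g = 0 ↔ ∀ x ∈ g.coeff.support, φ x ≠ i := by
  rw [proj_gradeBy, ← ofCoeff_zero, ofCoeff_inj, Finsupp.filter_eq_zero_iff]
  exact forall_congr' fun x => by rw [Finsupp.mem_support_iff]; tauto

end AddMonoidAlgebra

namespace GradedRing

section

variable {ι A σ : Type*} [DecidableEq ι] [Semiring A] [SetLike σ A] [AddSubmonoidClass σ A]
  (𝒜 : ι → σ)

theorem proj_proj [AddMonoid ι] [GradedRing 𝒜] (i j : ι) (a : A) :
    proj 𝒜 i (proj 𝒜 j a) = if i = j then proj 𝒜 j a else 0 := by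
  split_ifs with h
  · subst h; exact decompose_of_mem_same 𝒜 (decompose 𝒜 a i).2
  · exact decompose_of_mem_ne 𝒜 (decompose 𝒜 a j).2 (Ne.symm h)

variable [AddCommGroup ι] [GradedRing 𝒜]

theorem proj_mul_of_mem_left {a : A} {p : ι} (ha : a ∈ 𝒜 p) (b : A) (m : ι) :
    proj 𝒜 m (a * b) = a * proj 𝒜 (m - p) b := by
  have := coe_decompose_mul_add_of_left_mem 𝒜 (j := m - p) (b := b) ha
  rwa [add_sub_cancel] at this

variable [LinearOrder ι] [IsOrderedAddMonoid ι]

theorem exists_mem_proj_eq_of_mem_span (I : Ideal A) {g : A}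
    (hg : g ∈ Ideal.span {x | ∃ h ∈ I, ∃ μ, (∀ i < μ, proj 𝒜 i h = 0) ∧ x = proj 𝒜 μ h})
    (m : ι) : ∃ H ∈ I, (∀ i < m, proj 𝒜 i H = 0) ∧ proj 𝒜 m H = proj 𝒜 m g := by
  induction hg using Submodule.span_induction generalizing m with
  | mem x hx =>
    obtain ⟨h, hI, μ, hlow, rfl⟩ := hx
    by_cases hm : m = μ
    · subst hm
      exact ⟨h, hI, hlow, by rw [proj_proj, if_pos rfl]⟩
    · exact ⟨0, I.zero_mem, fun _ _ => map_zero _, by rw [proj_proj, if_neg hm, map_zero]⟩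
  | zero => exact ⟨0, I.zero_mem, fun _ _ => map_zero _, rfl⟩
  | add x y _ _ ihx ihy =>
    obtain ⟨H₁, hH₁, hlow₁, hproj₁⟩ := ihx m
    obtain ⟨H₂, hH₂, hlow₂, hproj₂⟩ := ihy m
    refine ⟨H₁ + H₂, I.add_mem hH₁ hH₂, fun i hi => ?_, ?_⟩
    · rw [map_add, hlow₁ i hi, hlow₂ i hi, add_zero]
    · rw [map_add, map_add, hproj₁, hproj₂]
  | smul c x _ ih =>
    choose H hH hlow hproj using ih
    have hc (p : ι) : proj 𝒜 p c ∈ 𝒜 p := (decompose 𝒜 c p).2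
    refine ⟨∑ p ∈ (decompose 𝒜 c).support, proj 𝒜 p c * H (m - p),
      Ideal.sum_mem I fun p _ => I.mul_mem_left _ (hH _), fun i hi => ?_, ?_⟩
    · refine (map_sum _ _ _).trans (Finset.sum_eq_zero fun p _ => ?_)
      rw [proj_mul_of_mem_left 𝒜 (hc p), hlow _ _ (sub_lt_sub_right hi p), mul_zero]
    · conv_rhs => rw [smul_eq_mul, ← sum_support_decompose 𝒜 c, Finset.sum_mul]
      simp only [map_sum, ← proj_apply]
      refine Finset.sum_congr rfl fun p _ => ?_
      rw [proj_mul_of_mem_left 𝒜 (hc p), proj_mul_of_mem_left 𝒜 (hc p), hproj]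

end

section

variable {A σ : Type*} [Semiring A] [SetLike σ A] [AddSubmonoidClass σ A]
  (𝒜 : ℤ → σ) [GradedRing 𝒜]

theorem exists_eq_proj_zero_add_sum {H : A} (hH : ∀ i < 0, proj 𝒜 i H = 0) :
    ∃ d : ℕ, H = proj 𝒜 0 H + ∑ k ∈ Finset.range d, proj 𝒜 (k + 1) H := by
  set s := (decompose 𝒜 H).support
  refine ⟨s.sup Int.toNat, ?_⟩
  have hs : s ⊆ (Finset.range (s.sup Int.toNat + 1)).map Nat.castEmbedding := by
    intro i hi
    have hi0 : 0 ≤ i := not_lt.mp fun h => (mem_support_iff 𝒜 H i).mp hi (hH i h)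
    refine Finset.mem_map.mpr ⟨i.toNat, Finset.mem_range.mpr (Nat.lt_succ_of_le ?_), ?_⟩
    · exact Finset.le_sup (f := Int.toNat) hi
    · simp [hi0]
  conv_lhs => rw [← sum_support_decompose 𝒜 H]
  rw [Finset.sum_subset hs fun i _ hi => by simpa [s] using hi, Finset.sum_map,
    Finset.sum_range_succ', add_comm]
  rfl

theorem proj_add_sum_of_mem {a : A} {b : ℕ → A} (ha : a ∈ 𝒜 0)
    (hb : ∀ k : ℕ, b k ∈ 𝒜 (k + 1)) (d : ℕ) {i : ℤ} (hi : i ≤ 0) :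
    proj 𝒜 i (a + ∑ k ∈ Finset.range d, b k) = if i = 0 then a else 0 := by
  rw [map_add, map_sum, Finset.sum_eq_zero fun k _ => ?_, add_zero]
  · split_ifs with h
    · subst h; exact decompose_of_mem_same 𝒜 ha
    · exact decompose_of_mem_ne 𝒜 ha (Ne.symm h)
  · exact decompose_of_mem_ne 𝒜 (hb k) (by omega)

end

end GradedRing

section LaurentPolynomial

open AddMonoidAlgebra

variable {n : ℕ}

abbrev lastGrading (R : Type*) [CommSemiring R] (n : ℕ) :
    ℤ → Submodule R (AddMonoidAlgebra R (Fin (n + 1) → ℤ)) :=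
  gradeBy R (Pi.evalAddMonoidHom (fun _ => ℤ) (Fin.last n))

variable {R : Type*} [CommSemiring R]

theorem single_mem_lastGrading (x : Fin (n + 1) → ℤ) (r : R) :
    single x r ∈ lastGrading R n (x (Fin.last n)) :=
  single_mem_gradeBy _ x r

theorem exists_eq_add_sum_single_mul_iff {f H : AddMonoidAlgebra R (Fin (n + 1) → ℤ)} (hf : f ∈ lastGrading R n 0) :
    (∃ (d : ℕ) (fs : ℕ → AddMonoidAlgebra R (Fin (n + 1) → ℤ)),
      (∀ k, fs k ∈ lastGrading R n 0) ∧
        H = f + ∑ k ∈ Finset.range d, single (Pi.single (Fin.last n) ((k : ℤ) + 1)) 1 * fs k) ↔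
      (∀ i < 0, proj (lastGrading R n) i H = 0) ∧ proj (lastGrading R n) 0 H = f := by
  constructor
  · rintro ⟨d, fs, hfs, rfl⟩
    have hproj {i : ℤ} (hi : i ≤ 0) := proj_add_sum_of_mem (lastGrading R n) hf (fun k => by
      simpa using SetLike.mul_mem_graded
        (single_mem_lastGrading (Pi.single (Fin.last n) ((k : ℤ) + 1)) 1) (hfs k)) d hi
    exact ⟨fun i hi => by rw [hproj hi.le, if_neg hi.ne], by rw [hproj le_rfl, if_pos rfl]⟩
  · rintro ⟨hlow, rfl⟩
    obtain ⟨d, hd⟩ := exists_eq_proj_zero_add_sum (lastGrading R n) hlow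
    refine ⟨d, fun k => single (-Pi.single (Fin.last n) ((k : ℤ) + 1)) 1 *
      proj (lastGrading R n) (k + 1) H, fun k => ?_, ?_⟩
    · simpa using SetLike.mul_mem_graded
        (single_mem_lastGrading (-Pi.single (Fin.last n) ((k : ℤ) + 1)) 1)
        (decompose (lastGrading R n) H ((k : ℤ) + 1)).2
    · simp_rw [single_mul_single_neg_mul]
      exact hd

variable {κ : Type*} [Field κ]

theorem initialFormLast_eq_proj {h : AddMonoidAlgebra κ (Fin (n + 1) → ℤ)} {μ : ℤ}
    (hlow : ∀ i < μ, proj (lastGrading κ n) i h = 0) (hμ : proj (lastGrading κ n) μ h ≠ 0) :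
    initialFormLast h = proj (lastGrading κ n) μ h := by
  have hge : ∀ y ∈ h.coeff.support, μ ≤ y (Fin.last n) := fun y hy => not_lt.mp fun hlt =>
    (proj_gradeBy_eq_zero_iff _).mp (hlow _ hlt) y hy rfl
  obtain ⟨y, hy, hyμ⟩ : ∃ y ∈ h.coeff.support, y (Fin.last n) = μ := by
    simpa using mt (proj_gradeBy_eq_zero_iff _).mpr hμ
  rw [initialFormLast, proj_gradeBy, Finsupp.filter_eq_sum, ofCoeff_sum]
  refine Finset.sum_congr (Finset.filter_congr fun x hx => ?_) fun _ _ => rfl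
  exact ⟨fun hmin => le_antisymm (hyμ ▸ hmin y hy) (hge x hx),
    fun hx z hz => (show x (Fin.last n) = μ from hx) ▸ hge z hz⟩

theorem exists_initialFormLast_eq_proj (h : AddMonoidAlgebra κ (Fin (n + 1) → ℤ)) :
    ∃ μ, (∀ i < μ, proj (lastGrading κ n) i h = 0) ∧
      initialFormLast h = proj (lastGrading κ n) μ h := by
  obtain rfl | hh := eq_or_ne h 0
  · exact ⟨0, fun _ _ => map_zero _, by simp [initialFormLast]⟩
  have hne : (decompose (lastGrading κ n) h).support.Nonempty := by
    rw [Finset.nonempty_iff_ne_empty, Ne, DFinsupp.support_eq_empty, ← decompose_zero,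
      (decompose _).injective.eq_iff]
    exact hh
  set μ := (decompose (lastGrading κ n) h).support.min' hne
  have hlow : ∀ i < μ, proj (lastGrading κ n) i h = 0 := fun i hi => by
    simpa [mem_support_iff] using mt (Finset.min'_le _ i) (not_le.mpr hi)
  exact ⟨μ, hlow, initialFormLast_eq_proj hlow ((mem_support_iff _ h μ).mp (Finset.min'_mem _ _))⟩

theorem mem_span_initialFormLast_iff (I : Ideal (AddMonoidAlgebra κ (Fin (n + 1) → ℤ)))
    {f : AddMonoidAlgebra κ (Fin (n + 1) → ℤ)} (hf : f ∈ lastGrading κ n 0) :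
    f ∈ Ideal.span {g | ∃ h ∈ I, g = initialFormLast h} ↔
      ∃ H ∈ I, (∀ i < 0, proj (lastGrading κ n) i H = 0) ∧ proj (lastGrading κ n) 0 H = f := by
  constructor
  · intro hmem
    have hspan : f ∈ Ideal.span {x | ∃ h ∈ I, ∃ μ,
        (∀ i < μ, proj (lastGrading κ n) i h = 0) ∧ x = proj (lastGrading κ n) μ h} := by
      refine Ideal.span_mono ?_ hmem
      rintro _ ⟨h, hI, rfl⟩
      exact ⟨h, hI, exists_initialFormLast_eq_proj h⟩
    obtain ⟨H, hHI, hlow, hH0⟩ := exists_mem_proj_eq_of_mem_span _ I hspan 0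
    exact ⟨H, hHI, hlow, hH0.trans (decompose_of_mem_same _ hf)⟩
  · rintro ⟨H, hHI, hlow, rfl⟩
    obtain hH0 | hH0 := eq_or_ne (proj (lastGrading κ n) 0 H) 0
    · exact hH0 ▸ zero_mem _
    exact Ideal.subset_span ⟨H, hHI, (initialFormLast_eq_proj hlow hH0).symm⟩

end LaurentPolynomial

/-- Let `κ` be a field and `I` an ideal of the Laurent polynomial ring
`κ[x₁^{±1}, …, x_{n+1}^{±1}]`, and write `x_{n+1}` for the last variable.  For every
Laurent polynomial `f` not involving `x_{n+1}`, `f` lies in the ideal generated by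
`{In_{e_{n+1}} g : g ∈ I}` if and only if there are `d ≥ 0` and Laurent polynomials
`f₁, …, f_d` not involving `x_{n+1}` with `f + x_{n+1} f₁ + ⋯ + x_{n+1}^d f_d ∈ I`. -/
theorem mem_initial_ideal_iff_lift
    {κ : Type*} [Field κ] {n : ℕ}
    (I : Ideal (AddMonoidAlgebra κ (Fin (n + 1) → ℤ)))
    (f : AddMonoidAlgebra κ (Fin (n + 1) → ℤ))
    (hf : ∀ lam ∈ f.coeff.support, lam (Fin.last n) = 0) :
    f ∈ Ideal.span {g | ∃ h ∈ I, g = initialFormLast h} ↔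
      ∃ (d : ℕ) (fs : ℕ → AddMonoidAlgebra κ (Fin (n + 1) → ℤ)),
        (∀ k, ∀ lam ∈ (fs k).coeff.support, lam (Fin.last n) = 0) ∧
        f + ∑ k ∈ Finset.range d,
            (AddMonoidAlgebra.single (Pi.single (Fin.last n) ((k : ℤ) + 1)) (1 : κ)) * fs k
          ∈ I := by
  have hf₀ : f ∈ lastGrading κ n 0 := hf
  rw [mem_span_initialFormLast_iff I hf₀]
  constructor
  · rintro ⟨H, hHI, hH⟩
    obtain ⟨d, fs, hfs, rfl⟩ := (exists_eq_add_sum_single_mul_iff hf₀).mpr hH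
    exact ⟨d, fs, hfs, hHI⟩
  · rintro ⟨d, fs, hfs, hI⟩
    exact ⟨_, hI, (exists_eq_add_sum_single_mul_iff hf₀).mp ⟨d, fs, hfs, rfl⟩⟩
end

section
/- Let K be an algebraically closed field with a surjective valuation v: K^* → ℚ. Let m ≥ 2 and let d(i,j) ∈ ℚ, for 1 ≤ i < j ≤ m, be a symmetric array such that for all distinct indices i, j, k the minimum of d(i,j), d(j,k), d(i,k) is attained at least twice. Then there exist distinct elements z_1, …, z_m ∈ K with v(z_i − z_j) = d(i,j) for all i ≠ j. -/
/-!
Induct on the number of points. Let `e` be the prescribed distances from the new point to the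
points `z i` already placed, maximal at `i₀` with value `t`. The tree condition forces
`e j = min t (d i₀ j)`, so a point `y` with `v (y - z i₀) = t` that is generic with respect to
the `z j` is what is needed. Writing `y = z i₀ + l w` with `v w = t`, genericity means that the
unit `l` avoids finitely many residue classes of units. A root `l` of `X * ∏ (X - b) - 1` does:
the valuations of `l` and of the `l - b` add up to `0`, which forces all of them to vanish.
-/

open Polynomial

theorem exists_mul_prod_sub_eq_one {K : Type*} [Field K] [IsAlgClosed K] (B : Finset K) :
    ∃ l : K, l * ∏ b ∈ B, (l - b) = 1 := by
  have hdeg : (X * ∏ b ∈ B, (X - C b)).natDegree ≠ 0 := by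
    rw [natDegree_X_mul (monic_prod_of_monic _ _ fun b _ => monic_X_sub_C b).ne_zero]
    exact Nat.succ_ne_zero _
  obtain ⟨l, hl⟩ := IsAlgClosed.eval_surjective hdeg 1
  exact ⟨l, by simpa [eval_prod] using hl⟩

def MinAttainedTwice {α : Type*} [LinearOrder α] (a b c : α) : Prop :=
  (a = b ∧ a ≤ c) ∨ (a = c ∧ a ≤ b) ∨ (b = c ∧ b ≤ a)

theorem MinAttainedTwice.eq_min_of_le {α : Type*} [LinearOrder α] {a b c : α}
    (h : MinAttainedTwice a b c) (hca : c ≤ a) : c = min a b := by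
  rcases h with ⟨rfl, hac⟩ | ⟨rfl, hab⟩ | ⟨rfl, hba⟩
  · rw [min_self, le_antisymm hca hac]
  · rw [min_eq_left hab]
  · rw [min_eq_right hba]

namespace AddValuation

variable {K Γ₀ : Type*} [LinearOrderedAddCommMonoidWithTop Γ₀]

theorem map_finset_prod [CommRing K] (v : AddValuation K Γ₀) {ι : Type*} (s : Finset ι)
    (f : ι → K) : v (∏ i ∈ s, f i) = ∑ i ∈ s, v (f i) := by
  classical
  induction s using Finset.induction_on with
  | empty => simp
  | insert a s ha ih => rw [Finset.prod_insert ha, Finset.sum_insert ha, map_mul, ih]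

theorem map_eq_zero_of_mul_prod_sub_eq_one [CommRing K] (v : AddValuation K Γ₀) {B : Finset K}
    (hB : ∀ b ∈ B, v b = 0) {l : K} (hl : l * ∏ b ∈ B, (l - b) = 1) :
    v l = 0 ∧ ∀ b ∈ B, v (l - b) = 0 := by
  have hsum : v l + ∑ b ∈ B, v (l - b) = 0 := by
    rw [← map_finset_prod, ← map_mul, hl, map_one]
  by_cases hl0 : 0 ≤ v l
  · have hfac : ∀ b ∈ B, 0 ≤ v (l - b) := fun b hb =>
      (le_min hl0 (hB b hb).ge).trans (v.map_sub l b)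
    rwa [add_eq_zero_iff_of_nonneg hl0 (Finset.sum_nonneg hfac),
      Finset.sum_eq_zero_iff_of_nonneg hfac] at hsum
  · rw [not_le] at hl0
    have hfac : ∀ b ∈ B, v (l - b) ≤ 0 := fun b hb => by
      rw [v.map_sub_eq_of_lt_left (hl0.trans_eq (hB b hb).symm)]
      exact hl0.le
    refine absurd ?_ (lt_irrefl (0 : Γ₀))
    calc (0 : Γ₀) = v l + ∑ b ∈ B, v (l - b) := hsum.symm
      _ ≤ v l + 0 := add_le_add le_rfl (Finset.sum_nonpos hfac)
      _ < 0 := by rwa [add_zero]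

variable [Field K] [IsAlgClosed K] (v : AddValuation K Γ₀)

/-- A unit whose residue avoids the residues of the units in `B`. -/
theorem exists_map_sub_eq_min_zero (B : Finset K) :
    ∃ l : K, ∀ b ∈ B, v (l - b) = min 0 (v b) := by
  classical
  obtain ⟨l, hl⟩ := exists_mul_prod_sub_eq_one (B.filter fun b => v b = 0)
  obtain ⟨hl0, hunits⟩ :=
    v.map_eq_zero_of_mul_prod_sub_eq_one (fun b hb => (Finset.mem_filter.1 hb).2) hl
  refine ⟨l, fun b hb => ?_⟩
  by_cases hb0 : v b = 0
  · rw [hunits b (Finset.mem_filter.2 ⟨hb, hb0⟩), hb0, min_self]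
  · rw [sub_eq_add_neg, v.map_add_of_distinct_val (by rw [map_neg, hl0]; exact Ne.symm hb0),
      map_neg, hl0]

theorem exists_map_sub_eq_min {w : K} (hw : w ≠ 0) (a : K) (S : Finset K) :
    ∃ y : K, ∀ s ∈ S, v (y - s) = min (v w) (v (a - s)) := by
  classical
  obtain ⟨l, hl⟩ := v.exists_map_sub_eq_min_zero (S.image fun s => (s - a) / w)
  refine ⟨a + l * w, fun s hs => ?_⟩
  have hfactor : a + l * w - s = w * (l - (s - a) / w) := by field_simp; ring
  rw [hfactor, map_mul, hl _ (Finset.mem_image_of_mem _ hs), ← min_add_add_left, add_zero,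
    ← map_mul, mul_div_cancel₀ _ hw, map_sub_swap]

end AddValuation

section Realization

variable {K Γ : Type*} [Field K] [IsAlgClosed K]
  [AddCancelCommMonoid Γ] [LinearOrder Γ] [IsOrderedAddMonoid Γ]
  (v : AddValuation K (WithTop Γ)) (hsurj : ∀ g : Γ, ∃ x : K, v x = g)
include hsurj

theorem exists_map_sub_eq_of_minAttainedTwice {ι : Type*} [Finite ι] (z : ι → K)
    (d : ι → ι → Γ) (hz : ∀ i j, i ≠ j → v (z i - z j) = d i j) (e : ι → Γ)
    (he : ∀ i j, i ≠ j → MinAttainedTwice (e i) (d i j) (e j)) :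
    ∃ y : K, ∀ j, v (y - z j) = e j := by
  classical
  cases isEmpty_or_nonempty ι
  · exact ⟨0, isEmptyElim⟩
  have := Fintype.ofFinite ι
  obtain ⟨i₀, hi₀⟩ := Finite.exists_max e
  obtain ⟨w, hw⟩ := hsurj (e i₀)
  have hw0 : w ≠ 0 := by
    rintro rfl
    simp at hw
  obtain ⟨y, hy⟩ := v.exists_map_sub_eq_min hw0 (z i₀) (Finset.univ.image z)
  refine ⟨y, fun j => ?_⟩
  rw [hy _ (Finset.mem_image_of_mem z (Finset.mem_univ j)), hw]
  rcases eq_or_ne j i₀ with rfl | hj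
  · simp
  · rw [hz i₀ j hj.symm, ← WithTop.coe_min, ← (he i₀ j hj.symm).eq_min_of_le (hi₀ j)]

theorem exists_map_sub_eq_of_forall_minAttainedTwice (m : ℕ) (d : Fin m → Fin m → Γ)
    (hsym : ∀ i j, i ≠ j → d i j = d j i)
    (htree : ∀ i j k, i ≠ j → j ≠ k → i ≠ k →
      MinAttainedTwice (d i j) (d j k) (d i k)) :
    ∃ z : Fin m → K, ∀ i j, i ≠ j → v (z i - z j) = d i j := by
  induction m with
  | zero => exact ⟨Fin.elim0, fun i => i.elim0⟩
  | succ m ih =>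
    have hcast {i j : Fin m} (h : i ≠ j) : i.castSucc ≠ j.castSucc :=
      (Fin.castSucc_injective m).ne h
    have hlast (i : Fin m) : Fin.last m ≠ i.castSucc := (Fin.castSucc_lt_last i).ne'
    obtain ⟨z, hz⟩ := ih (fun i j => d i.castSucc j.castSucc)
      (fun i j hij => hsym _ _ (hcast hij))
      (fun i j k hij hjk hik => htree _ _ _ (hcast hij) (hcast hjk) (hcast hik))
    obtain ⟨y, hy⟩ := exists_map_sub_eq_of_minAttainedTwice v hsurj z _ hz
      (fun j => d (Fin.last m) j.castSucc)
      (fun i j hij => htree _ _ _ (hlast i) (hcast hij) (hlast j))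
    refine ⟨Fin.snoc z y, fun i j hij => ?_⟩
    induction i using Fin.lastCases <;> induction j using Fin.lastCases
    · exact absurd rfl hij
    · simpa using hy _
    · rw [Fin.snoc_castSucc, Fin.snoc_last, v.map_sub_swap, hy, hsym _ _ (hlast _)]
    · simpa using hz _ _ (fun h => hij (congrArg _ h))

end Realization

theorem tree_metric_realizable_in_valued_field_general
    {K : Type*} [Field K] [IsAlgClosed K] (v : K → WithTop ℚ)
    (hv0 : ∀ x : K, v x = ⊤ ↔ x = 0)
    (hvmul : ∀ x y : K, v (x * y) = v x + v y)
    (hvadd : ∀ x y : K, min (v x) (v y) ≤ v (x + y))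
    (hsurj : ∀ q : ℚ, ∃ x : K, v x = (q : WithTop ℚ))
    (m : ℕ) (d : Fin m → Fin m → ℚ)
    (hsym : ∀ i j, i ≠ j → d i j = d j i)
    (htree : ∀ i j k, i ≠ j → j ≠ k → i ≠ k →
      (d i j = d j k ∧ d i j ≤ d i k) ∨ (d i j = d i k ∧ d i j ≤ d j k) ∨
        (d j k = d i k ∧ d j k ≤ d i j)) :
    ∃ z : Fin m → K, Function.Injective z ∧
      ∀ i j, i ≠ j → v (z i - z j) = ((d i j : ℚ) : WithTop ℚ) := by
  have hv1 : v 1 = 0 := by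
    have h : v 1 + 0 = v 1 + v 1 := by rw [add_zero, ← hvmul, one_mul]
    exact (WithTop.add_left_cancel (mt (hv0 1).1 one_ne_zero) h).symm
  let val := AddValuation.of v ((hv0 0).2 rfl) hv1 hvadd hvmul
  obtain ⟨z, hz⟩ := exists_map_sub_eq_of_forall_minAttainedTwice val hsurj m d hsym htree
  refine ⟨z, fun i j hzij => by_contra fun hij => ?_, hz⟩
  have := hz i j hij
  rw [AddValuation.of_apply, hzij, sub_self, (hv0 0).2 rfl] at this
  exact WithTop.top_ne_coe this

/-- Let `K` be an algebraically closed field with a surjective valuation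
`v : K^* → ℚ` (encoded as `v : K → WithTop ℚ` with `v x = ⊤` iff `x = 0`).
Let `m ≥ 2` and let `d i j ∈ ℚ` (`i ≠ j`) be a symmetric array such that for all distinct
`i, j, k` the minimum of `d i j, d j k, d i k` is attained at least twice.  Then there are
distinct `z₁, …, z_m ∈ K` with `v (zᵢ - zⱼ) = d i j` for all `i ≠ j`. -/
theorem tree_metric_realizable_in_valued_field
    {K : Type*} [Field K] [IsAlgClosed K] (v : K → WithTop ℚ)
    (hv0 : ∀ x : K, v x = ⊤ ↔ x = 0)
    (hvmul : ∀ x y : K, v (x * y) = v x + v y)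
    (hvadd : ∀ x y : K, min (v x) (v y) ≤ v (x + y))
    (hsurj : ∀ q : ℚ, ∃ x : K, v x = (q : WithTop ℚ))
    (m : ℕ) (hm : 2 ≤ m) (d : Fin m → Fin m → ℚ)
    (hsym : ∀ i j, i ≠ j → d i j = d j i)
    (htree : ∀ i j k, i ≠ j → j ≠ k → i ≠ k →
      (d i j = d j k ∧ d i j ≤ d i k) ∨ (d i j = d i k ∧ d i j ≤ d j k) ∨
        (d j k = d i k ∧ d j k ≤ d i j)) :
    ∃ z : Fin m → K, Function.Injective z ∧
      ∀ i j, i ≠ j → v (z i - z j) = ((d i j : ℚ) : WithTop ℚ) :=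
  tree_metric_realizable_in_valued_field_general v hv0 hvmul hvadd hsurj m d hsym htree
end
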